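/- arXiv:2310.16970 — 7 statements merged into one kernel-verified Lean document; each statement's English description precedes it below -/
import Mathlib

section
/- There exists ε > 0 such that every finite graph G of VC-dimension at most 1 contains a clique or an independent set of size at least |V(G)|^ε. -/
/-- A graph has VC-dimension < `d` if no `d` pairwise distinct vertices are
shattered by vertex neighborhoods. -/
def VCDimLT {V : Type} (G : SimpleGraph V) (d : ℕ) : Prop :=
  ¬ ∃ x : Fin d → V, Function.Injective x ∧
      ∀ f : Fin d → Bool, ∃ a : V, ∀ i, G.Adj a (x i) ↔ f i = true

open Finset

/-- Key VC lemma: if `x y` are adjacent with a common neighbor `z`, then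
every vertex is `x`, `y`, or adjacent to one of them. -/
lemma vc_dom {V : Type} {G : SimpleGraph V} (h : VCDimLT G 2) {x y z : V}
    (hxy : G.Adj x y) (hzx : G.Adj z x) (hzy : G.Adj z y) (a : V) :
    a = x ∨ a = y ∨ G.Adj a x ∨ G.Adj a y := by
  by_contra hc
  push_neg at hc
  obtain ⟨hax, hay, hnx, hny⟩ := hc
  have hne : x ≠ y := hxy.ne
  apply h
  refine ⟨![x, y], ?_, ?_⟩
  · intro i j hij
    fin_cases i <;> fin_cases j <;> simp_all
  · intro f
    rcases hf0 : f 0 with _ | _ <;> rcases hf1 : f 1 with _ | _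
    · refine ⟨a, ?_⟩
      intro i; fin_cases i <;> simp [hnx, hny, hf0, hf1]
    · refine ⟨x, ?_⟩
      intro i; fin_cases i <;> simp [hxy, hf0, hf1]
    · refine ⟨y, ?_⟩
      intro i; fin_cases i <;> simp [hxy.symm, hf0, hf1]
    · refine ⟨z, ?_⟩
      intro i; fin_cases i <;> simp [hzx, hzy, hf0, hf1]

lemma nat_cube_bound {n ω M : ℕ} (hn : 0 < n) (h1 : n ≤ ω * M) (h2 : ω ^ 3 ≤ n ^ 2) :
    n ≤ M ^ 3 := by
  have h3 : n ^ 3 ≤ (ω * M) ^ 3 := Nat.pow_le_pow_left h1 3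
  have h5 : n ^ 3 ≤ n ^ 2 * M ^ 3 := by
    calc n ^ 3 ≤ ω ^ 3 * M ^ 3 := by rw [show ω ^ 3 * M ^ 3 = (ω * M) ^ 3 by ring]; exact h3
    _ ≤ n ^ 2 * M ^ 3 := Nat.mul_le_mul_right _ h2
  have h6 : n ^ 2 * n ≤ n ^ 2 * M ^ 3 := by
    calc n ^ 2 * n = n ^ 3 := by ring
    _ ≤ n ^ 2 * M ^ 3 := h5
  exact Nat.le_of_mul_le_mul_left h6 (by positivity)

lemma core_lemma (V : Type) [Fintype V] (G : SimpleGraph V) (hVC : VCDimLT G 2) :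
    ∃ s : Finset V, (G.IsClique (s : Set V) ∨ Gᶜ.IsClique (s : Set V)) ∧
      Fintype.card V ≤ s.card ^ 3 := by
  classical
  set n := Fintype.card V with hn
  by_cases hbig : 9 ≤ n
  swap
  · -- small cases
    by_cases h2 : 2 ≤ n
    · obtain ⟨v, w, hvw⟩ := Fintype.exists_pair_of_one_lt_card (α := V) (by omega)
      have hcard : ({v, w} : Finset V).card = 2 := Finset.card_pair hvw
      by_cases hadj : G.Adj v w
      · refine ⟨{v, w}, Or.inl ?_, by rw [hcard]; omega⟩
        intro a ha b hb hab
        simp only [Finset.coe_insert, Finset.coe_singleton, Set.mem_insert_iff,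
          Set.mem_singleton_iff, Finset.mem_coe, Finset.mem_insert,
          Finset.mem_singleton] at ha hb
        rcases ha with rfl | rfl <;> rcases hb with rfl | rfl
        · exact absurd rfl hab
        · exact hadj
        · exact hadj.symm
        · exact absurd rfl hab
      · refine ⟨{v, w}, Or.inr ?_, by rw [hcard]; omega⟩
        intro a ha b hb hab
        simp only [Finset.coe_insert, Finset.coe_singleton, Set.mem_insert_iff,
          Set.mem_singleton_iff, Finset.mem_coe, Finset.mem_insert,
          Finset.mem_singleton] at ha hb
        rcases ha with rfl | rfl <;> rcases hb with rfl | rfl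
        · exact absurd rfl hab
        · exact (G.compl_adj a b).mpr ⟨hvw, hadj⟩
        · exact (G.compl_adj a b).mpr ⟨hvw.symm, fun h => hadj h.symm⟩
        · exact absurd rfl hab
    · by_cases h1 : n = 0
      · exact ⟨∅, Or.inl (by simp [SimpleGraph.isClique_empty]), by omega⟩
      · have hpos : 0 < n := by omega
        obtain ⟨v⟩ := Fintype.card_pos_iff.mp hpos
        refine ⟨{v}, Or.inl (by simp), ?_⟩
        simp only [Finset.card_singleton]
        omega
  · -- main case: n ≥ 9
    have hnpos : 0 < n := by omega
    -- maximum clique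
    have hCne : (univ.powerset.filter (fun t : Finset V => G.IsClique (t : Set V))).Nonempty :=
      ⟨∅, by simp⟩
    obtain ⟨K, hKmem, hKge⟩ := Finset.exists_max_image _ Finset.card hCne
    have hK : G.IsClique (K : Set V) := (Finset.mem_filter.mp hKmem).2
    have hmax : ∀ t : Finset V, G.IsClique (t : Set V) → t.card ≤ K.card := by
      intro t ht
      exact hKge t (Finset.mem_filter.mpr ⟨Finset.mem_powerset.mpr (Finset.subset_univ t), ht⟩)
    by_cases h3 : 3 ≤ K.card
    · -- there is a triangle
      by_cases hbound : n ≤ K.card ^ 3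
      · exact ⟨K, Or.inl hK, hbound⟩
      · push_neg at hbound
        -- every vertex has a non-neighbor in K
        have exmiss : ∀ v : V, ∃ k ∈ K, ¬ G.Adj v k := by
          intro v
          by_cases hv : v ∈ K
          · exact ⟨v, hv, G.irrefl⟩
          · by_contra hc
            push_neg at hc
            have hins : G.IsClique ((insert v K : Finset V) : Set V) := by
              rw [Finset.coe_insert]
              exact hK.insert (fun b hb _ => hc b (Finset.mem_coe.mp hb))
            have := hmax _ hins
            rw [Finset.card_insert_of_notMem hv] at this
            omega
        -- uniqueness of the non-neighbor
        have uniqmiss : ∀ v : V, ∀ k1 ∈ K, ∀ k2 ∈ K,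
            ¬ G.Adj v k1 → ¬ G.Adj v k2 → k1 = k2 := by
          intro v k1 h1 k2 h2 n1 n2
          by_contra hne
          have hk2 : k2 ∈ K.erase k1 := Finset.mem_erase.mpr ⟨Ne.symm hne, h2⟩
          have hcard : 0 < ((K.erase k1).erase k2).card := by
            rw [Finset.card_erase_of_mem hk2, Finset.card_erase_of_mem h1]
            omega
          obtain ⟨k3, hk3⟩ := Finset.card_pos.mp hcard
          obtain ⟨hne2, hk3'⟩ := Finset.mem_erase.mp hk3
          obtain ⟨hne1, hk3K⟩ := Finset.mem_erase.mp hk3'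
          have a12 : G.Adj k1 k2 := hK (Finset.mem_coe.mpr h1) (Finset.mem_coe.mpr h2) hne
          have a31 : G.Adj k3 k1 := hK (Finset.mem_coe.mpr hk3K) (Finset.mem_coe.mpr h1) hne1
          have a32 : G.Adj k3 k2 := hK (Finset.mem_coe.mpr hk3K) (Finset.mem_coe.mpr h2) hne2
          rcases vc_dom hVC a12 a31 a32 v with rfl | rfl | h | h
          · exact n2 a12
          · exact n1 a12.symm
          · exact n1 h
          · exact n2 h
        -- color map
        set c : V → V := fun v => (exmiss v).choose with hcdef
        have hcK : ∀ v, c v ∈ K := fun v => (exmiss v).choose_spec.1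
        have hcmiss : ∀ v, ¬ G.Adj v (c v) := fun v => (exmiss v).choose_spec.2
        have hcadj : ∀ v : V, ∀ k ∈ K, k ≠ c v → G.Adj v k := by
          intro v k hk hne
          by_contra hna
          exact hne (uniqmiss v k hk (c v) (hcK v) hna (hcmiss v))
        -- partition into fibers
        have hsum : n = ∑ k ∈ K, (univ.filter (fun v => c v = k)).card := by
          rw [hn, ← Finset.card_univ]
          exact Finset.card_eq_sum_card_fiberwise (fun v _ => hcK v)
        set M := K.sup (fun k => (univ.filter (fun v => c v = k)).card) with hMdef
        have hnM : n ≤ K.card * M := by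
          calc n = ∑ k ∈ K, (univ.filter (fun v => c v = k)).card := hsum
          _ ≤ K.card * M := by
            rw [← smul_eq_mul]
            exact Finset.sum_le_card_nsmul K _ M
              (fun k hk => Finset.le_sup (f := fun k => (univ.filter (fun v => c v = k)).card) hk)
        have hKne : K.Nonempty := Finset.card_pos.mp (by omega)
        obtain ⟨k0, hk0K, hk0⟩ := Finset.exists_mem_eq_sup K hKne
          (fun k => (univ.filter (fun v => c v = k)).card)
        set s0 := univ.filter (fun v => c v = k0) with hs0def
        -- the fiber is independent
        have hs0 : Gᶜ.IsClique (s0 : Set V) := by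
          intro u hu w hw hne
          simp only [hs0def, Finset.coe_filter, Set.mem_setOf_eq] at hu hw
          refine (G.compl_adj u w).mpr ⟨hne, fun hadj => ?_⟩
          have hmu : ¬ G.Adj u k0 := hu.2 ▸ hcmiss u
          have hmw : ¬ G.Adj w k0 := hw.2 ▸ hcmiss w
          have huk0 : u ≠ k0 := fun h => hmw (h ▸ hadj.symm)
          have hwk0 : w ≠ k0 := fun h => hmu (h ▸ hadj)
          have huK : u ∉ K := fun h =>
            hmu (hK (Finset.mem_coe.mpr h) (Finset.mem_coe.mpr hk0K) huk0)
          have hwK : w ∉ K := fun h =>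
            hmw (hK (Finset.mem_coe.mpr h) (Finset.mem_coe.mpr hk0K) hwk0)
          have hadju : ∀ b ∈ K.erase k0, G.Adj u b := by
            intro b hb
            obtain ⟨hbne, hbK⟩ := Finset.mem_erase.mp hb
            exact hcadj u b hbK (by rw [hu.2]; exact hbne)
          have hadjw : ∀ b ∈ K.erase k0, G.Adj w b := by
            intro b hb
            obtain ⟨hbne, hbK⟩ := Finset.mem_erase.mp hb
            exact hcadj w b hbK (by rw [hw.2]; exact hbne)
          -- build a bigger clique
          have hbase : G.IsClique ((K.erase k0 : Finset V) : Set V) :=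
            hK.subset (Finset.coe_subset.mpr (Finset.erase_subset _ _))
          have hstep1 : G.IsClique (insert w ((K.erase k0 : Finset V) : Set V)) :=
            hbase.insert (fun b hb _ => hadjw b (Finset.mem_coe.mp hb))
          have hstep2 : G.IsClique (insert u (insert w ((K.erase k0 : Finset V) : Set V))) := by
            refine hstep1.insert (fun b hb hbne => ?_)
            rcases Set.mem_insert_iff.mp hb with rfl | hb'
            · exact hadj
            · exact hadju b (Finset.mem_coe.mp hb')
          have hclq : G.IsClique ((insert u (insert w (K.erase k0)) : Finset V) : Set V) := by
            rw [Finset.coe_insert, Finset.coe_insert]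
            exact hstep2
          have hwmem : w ∉ K.erase k0 := fun h => hwK (Finset.mem_of_mem_erase h)
          have humem : u ∉ insert w (K.erase k0) := by
            rw [Finset.mem_insert]
            push_neg
            exact ⟨hne, fun h => huK (Finset.mem_of_mem_erase h)⟩
          have hcardT := hmax _ hclq
          rw [Finset.card_insert_of_notMem humem, Finset.card_insert_of_notMem hwmem,
            Finset.card_erase_of_mem hk0K] at hcardT
          omega
        refine ⟨s0, Or.inr hs0, ?_⟩
        have hMeq : M = s0.card := hk0
        rw [hMeq] at hnM
        refine nat_cube_bound hnpos hnM ?_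
        have : n ≤ n ^ 2 := Nat.le_self_pow (by norm_num) n
        omega
    · -- triangle-free case
      have tf : ∀ u v w : V, G.Adj u v → G.Adj u w → G.Adj v w → False := by
        intro u v w huv huw hvw
        have hcl : G.IsClique ((insert u (insert v {w}) : Finset V) : Set V) := by
          simp only [Finset.coe_insert, Finset.coe_singleton]
          intro a ha b hb hab
          simp only [Set.mem_insert_iff, Set.mem_singleton_iff] at ha hb
          rcases ha with rfl | rfl | rfl <;> rcases hb with rfl | rfl | rfl <;>
            first
              | exact absurd rfl hab
              | assumption
              | exact huv.symm
              | exact huw.symm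
              | exact hvw.symm
        have hcard : (insert u (insert v ({w} : Finset V))).card = 3 := by
          rw [Finset.card_insert_of_notMem, Finset.card_insert_of_notMem] <;>
            simp [huv.ne, huw.ne, hvw.ne]
        have := hmax _ hcl
        omega
      by_cases hd : ∃ v : V, n ≤ (univ.filter (fun u => G.Adj v u)).card ^ 3
      · obtain ⟨v, hv⟩ := hd
        refine ⟨univ.filter (fun u => G.Adj v u), Or.inr ?_, hv⟩
        intro a ha b hb hab
        simp only [Finset.coe_filter, Set.mem_setOf_eq] at ha hb
        exact (G.compl_adj a b).mpr ⟨hab, fun h => tf v a b ha.2 hb.2 h⟩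
      · push_neg at hd
        -- maximum independent set
        have hDne : (univ.powerset.filter (fun t : Finset V => Gᶜ.IsClique (t : Set V))).Nonempty :=
          ⟨∅, by simp⟩
        obtain ⟨J, hJmem, hJge⟩ := Finset.exists_max_image _ Finset.card hDne
        have hJ : Gᶜ.IsClique (J : Set V) := (Finset.mem_filter.mp hJmem).2
        have hJmax : ∀ t : Finset V, Gᶜ.IsClique (t : Set V) → t.card ≤ J.card := by
          intro t ht
          exact hJge t (Finset.mem_filter.mpr ⟨Finset.mem_powerset.mpr (Finset.subset_univ t), ht⟩)
        have hJne : J.Nonempty := by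
          obtain ⟨v⟩ := Fintype.card_pos_iff.mp hnpos
          have h1 : (1:ℕ) ≤ J.card := by
            have := hJmax {v} (by simp)
            simpa using this
          exact Finset.card_pos.mp (by omega)
        -- J dominates
        have hdom : ∀ v : V, v ∈ J ∨ ∃ u ∈ J, G.Adj u v := by
          intro v
          by_contra hcon
          push_neg at hcon
          obtain ⟨hvJ, hnadj⟩ := hcon
          have hins : Gᶜ.IsClique ((insert v J : Finset V) : Set V) := by
            rw [Finset.coe_insert]
            refine hJ.insert (fun b hb hne => (G.compl_adj v b).mpr ⟨hne, ?_⟩)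
            exact fun h => hnadj b (Finset.mem_coe.mp hb) h.symm
          have := hJmax _ hins
          rw [Finset.card_insert_of_notMem hvJ] at this
          omega
        have hcover : (univ : Finset V) ⊆
            J ∪ J.biUnion (fun u => univ.filter (fun v => G.Adj u v)) := by
          intro v _
          rcases hdom v with h | ⟨u, hu, hadj⟩
          · exact Finset.mem_union_left _ h
          · exact Finset.mem_union_right _
              (Finset.mem_biUnion.mpr ⟨u, hu, Finset.mem_filter.mpr ⟨Finset.mem_univ v, hadj⟩⟩)
        have hnsum : n ≤ ∑ u ∈ J, ((univ.filter (fun v => G.Adj u v)).card + 1) := by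
          have h1 : n ≤ J.card + ∑ u ∈ J, (univ.filter (fun v => G.Adj u v)).card := by
            calc n = (univ : Finset V).card := (Finset.card_univ).symm
            _ ≤ (J ∪ J.biUnion (fun u => univ.filter (fun v => G.Adj u v))).card :=
              Finset.card_le_card hcover
            _ ≤ J.card + (J.biUnion (fun u => univ.filter (fun v => G.Adj u v))).card :=
              Finset.card_union_le _ _
            _ ≤ J.card + ∑ u ∈ J, (univ.filter (fun v => G.Adj u v)).card :=
              Nat.add_le_add_left Finset.card_biUnion_le _
          rw [Finset.sum_add_distrib, Finset.sum_const, smul_eq_mul, mul_one]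
          omega
        set c := J.sup (fun u => (univ.filter (fun v => G.Adj u v)).card + 1) with hcdef
        have hnJc : n ≤ c * J.card := by
          rw [mul_comm]
          calc n ≤ ∑ u ∈ J, ((univ.filter (fun v => G.Adj u v)).card + 1) := hnsum
          _ ≤ J.card * c := by
            rw [← smul_eq_mul]
            exact Finset.sum_le_card_nsmul J _ c
              (fun u hu => Finset.le_sup
                (f := fun u => (univ.filter (fun v => G.Adj u v)).card + 1) hu)
        obtain ⟨u0, hu0J, hu0⟩ := Finset.exists_mem_eq_sup J hJne
          (fun u => (univ.filter (fun v => G.Adj u v)).card + 1)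
        have hc3 : c ^ 3 ≤ n ^ 2 := by
          set d := (univ.filter (fun v => G.Adj u0 v)).card with hddef
          have hdn : d ^ 3 < n := hd u0
          have hceq : c = d + 1 := hu0
          rcases Nat.eq_zero_or_pos d with h0 | h1
          · rw [hceq, h0]
            nlinarith
          · rw [hceq]
            have e0 : (d + 1) ^ 3 = d ^ 3 + 3 * d ^ 2 + 3 * d + 1 := by ring
            have e1 : d ^ 2 ≤ d ^ 3 := Nat.pow_le_pow_right h1 (by omega)
            have e2 : d ≤ d ^ 3 := by
              calc d = d ^ 1 := (pow_one d).symm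
              _ ≤ d ^ 3 := Nat.pow_le_pow_right h1 (by omega)
            have e3 : 1 ≤ d ^ 3 := Nat.one_le_pow _ _ h1
            have h8 : (d + 1) ^ 3 ≤ 8 * d ^ 3 := by linarith
            have h9 : 8 * n ≤ n ^ 2 := by nlinarith
            linarith
        exact ⟨J, Or.inr hJ, nat_cube_bound hnpos hnJc hc3⟩

theorem erdos_hajnal_vc_dim_le_one :
    ∃ ε : ℝ, 0 < ε ∧
      ∀ (V : Type) [Fintype V] (G : SimpleGraph V), VCDimLT G 2 →
        ∃ s : Finset V, (G.IsClique (s : Set V) ∨ Gᶜ.IsClique (s : Set V)) ∧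
          (Fintype.card V : ℝ) ^ ε ≤ s.card := by
  refine ⟨3⁻¹, by norm_num, ?_⟩
  intro V _ G hVC
  obtain ⟨s, hs, hcard⟩ := core_lemma V G hVC
  refine ⟨s, hs, ?_⟩
  have h1 : (Fintype.card V : ℝ) ≤ (s.card : ℝ) ^ (3 : ℕ) := by exact_mod_cast hcard
  calc (Fintype.card V : ℝ) ^ (3⁻¹ : ℝ)
      ≤ ((s.card : ℝ) ^ (3 : ℕ)) ^ (3⁻¹ : ℝ) :=
        Real.rpow_le_rpow (by positivity) h1 (by norm_num)
  _ = (s.card : ℝ) := by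
      rw [← Real.rpow_natCast (s.card : ℝ) 3, ← Real.rpow_mul (by positivity)]
      norm_num
end

section
/- For every k ∈ ℕ there exists ε > 0 such that every finite k-stable graph G contains a clique or an independent set of size at least |V(G)|^ε. -/
/-- A graph is `k`-stable if there are no `a₁,...,a_k`, `b₁,...,b_k` with
`E(aᵢ,bⱼ)` iff `i ≤ j`. -/
def KStable {V : Type} (G : SimpleGraph V) (k : ℕ) : Prop :=
  ¬ ∃ (a b : Fin k → V), ∀ i j, G.Adj (a i) (b j) ↔ i ≤ j

/-- A rectangular "order property" witness of shape `(p, q)`. -/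
def HasW {V : Type} (G : SimpleGraph V) (p q : ℕ) : Prop :=
  ∃ a : Fin p → V, ∃ b : Fin q → V, ∀ i j, G.Adj (a i) (b j) ↔ (i : ℕ) ≤ (j : ℕ)

noncomputable def ehEps (t : ℕ) : ℝ := (1/4) * (1/2)^t

lemma ehEps_pos (t : ℕ) : 0 < ehEps t := by unfold ehEps; positivity

lemma ehEps_le_quarter (t : ℕ) : ehEps t ≤ (4:ℝ)⁻¹ := by
  have h : ((1:ℝ)/2)^t ≤ 1 := pow_le_one₀ (by norm_num) (by norm_num)
  unfold ehEps; nlinarith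

lemma ehEps_le_one (t : ℕ) : ehEps t ≤ 1 := (ehEps_le_quarter t).trans (by norm_num)

lemma ehEps_succ (t : ℕ) : ehEps (t+1) = (2:ℝ)⁻¹ * ehEps t := by
  unfold ehEps; ring

/-- Greedy independent set in a graph with bounded degrees (real-valued bound). -/
lemma greedy_indep {V : Type} [DecidableEq V] (F : SimpleGraph V) [DecidableRel F.Adj] (D : ℝ) :
    ∀ (n : ℕ) (s : Finset V), s.card ≤ n →
      (∀ v ∈ s, (((s.filter (fun x => F.Adj v x)).card : ℝ)) ≤ D) →
      ∃ t : Finset V, t ⊆ s ∧ (∀ x ∈ t, ∀ y ∈ t, x ≠ y → ¬ F.Adj x y) ∧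
        (s.card : ℝ) ≤ (t.card : ℝ) * (D + 1) := by
  intro n
  induction n with
  | zero =>
    intro s hs _
    have hse : s = ∅ := Finset.card_eq_zero.mp (Nat.le_zero.mp hs)
    subst hse
    exact ⟨∅, Finset.Subset.refl _, by simp, by simp⟩
  | succ n IH =>
    intro s hs hdeg
    rcases s.eq_empty_or_nonempty with rfl | ⟨x, hx⟩
    · exact ⟨∅, Finset.Subset.refl _, by simp, by simp⟩
    · have hD0 : (0:ℝ) ≤ D := le_trans (Nat.cast_nonneg _) (hdeg x hx)
      set s' := (s.erase x).filter (fun y => ¬ F.Adj x y) with hs'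
      have hsub' : s' ⊆ s := (Finset.filter_subset _ _).trans (Finset.erase_subset _ _)
      have hcard' : s'.card ≤ n := by
        have h1 : s'.card ≤ (s.erase x).card :=
          Finset.card_le_card (Finset.filter_subset _ _)
        have h2 : (s.erase x).card + 1 = s.card := Finset.card_erase_add_one hx
        omega
      have hdeg' : ∀ v ∈ s', (((s'.filter (fun z => F.Adj v z)).card : ℝ)) ≤ D := by
        intro v hv
        have hsubf : s'.filter (fun z => F.Adj v z) ⊆ s.filter (fun z => F.Adj v z) :=
          Finset.filter_subset_filter _ hsub'
        have := Finset.card_le_card hsubf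
        exact le_trans (by exact_mod_cast this) (hdeg v (hsub' hv))
      obtain ⟨t, hts, hind, hcard⟩ := IH s' hcard' hdeg'
      have hxt : x ∉ t := fun h =>
        (Finset.mem_erase.mp ((Finset.filter_subset _ _) (hts h))).1 rfl
      refine ⟨insert x t, ?_, ?_, ?_⟩
      · intro z hz
        rcases Finset.mem_insert.mp hz with rfl | hz
        · exact hx
        · exact hsub' (hts hz)
      · intro a ha b hb hne
        rcases Finset.mem_insert.mp ha with ha1 | ha2
        · rcases Finset.mem_insert.mp hb with hb1 | hb2
          · exact absurd (ha1.trans hb1.symm) hne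
          · subst ha1
            exact (Finset.mem_filter.mp (hts hb2)).2
        · rcases Finset.mem_insert.mp hb with hb1 | hb2
          · subst hb1
            intro h
            exact (Finset.mem_filter.mp (hts ha2)).2 h.symm
          · exact hind a ha2 b hb2 hne
      · have hsplit : ((s.erase x).filter (fun y => F.Adj x y)).card
            + ((s.erase x).filter (fun y => ¬ F.Adj x y)).card = (s.erase x).card :=
          Finset.card_filter_add_card_filter_not _
        rw [← hs'] at hsplit
        have herase : (s.erase x).card + 1 = s.card := Finset.card_erase_add_one hx
        have hfsub : ((s.erase x).filter (fun y => F.Adj x y)).card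
            ≤ (s.filter (fun y => F.Adj x y)).card :=
          Finset.card_le_card (Finset.filter_subset_filter _ (Finset.erase_subset _ _))
        have hdx := hdeg x hx
        have hnat : s.card = ((s.erase x).filter (fun y => F.Adj x y)).card + s'.card + 1 := by
          omega
        have hreal : (s.card : ℝ) ≤ (s'.card : ℝ) + D + 1 := by
          rw [hnat]
          push_cast
          have : (((s.erase x).filter (fun y => F.Adj x y)).card : ℝ)
              ≤ ((s.filter (fun y => F.Adj x y)).card : ℝ) := by exact_mod_cast hfsub
          linarith
        rw [Finset.card_insert_of_notMem hxt]
        push_cast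
        nlinarith [hcard]

/-- Lift a clique/co-clique of an induced subgraph back to the ambient graph. -/
lemma lift_clique {V : Type} (G : SimpleGraph V) (S : Set V) (s : Finset S)
    (h : (G.induce S).IsClique (↑s : Set S) ∨ (G.induce S)ᶜ.IsClique (↑s : Set S)) :
    ∃ t : Finset V, (G.IsClique (↑t : Set V) ∨ Gᶜ.IsClique (↑t : Set V)) ∧ t.card = s.card := by
  classical
  refine ⟨s.map ⟨Subtype.val, Subtype.val_injective⟩, ?_, Finset.card_map _⟩
  have hmem : ∀ z ∈ (s.map ⟨Subtype.val, Subtype.val_injective⟩ : Finset V),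
      ∃ z' : S, z' ∈ s ∧ (z' : V) = z := by
    intro z hz
    obtain ⟨z', hz', rfl⟩ := Finset.mem_map.mp hz
    exact ⟨z', hz', rfl⟩
  rcases h with h | h
  · left
    intro x hx y hy hne
    obtain ⟨x', hx', rfl⟩ := hmem x (Finset.mem_coe.mp hx)
    obtain ⟨y', hy', rfl⟩ := hmem y (Finset.mem_coe.mp hy)
    have hne' : x' ≠ y' := fun e => hne (congrArg _ e)
    exact h (Finset.mem_coe.mpr hx') (Finset.mem_coe.mpr hy') hne'
  · right
    intro x hx y hy hne
    obtain ⟨x', hx', rfl⟩ := hmem x (Finset.mem_coe.mp hx)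
    obtain ⟨y', hy', rfl⟩ := hmem y (Finset.mem_coe.mp hy)
    have hne' : x' ≠ y' := fun e => hne (congrArg _ e)
    have h2 := h (Finset.mem_coe.mpr hx') (Finset.mem_coe.mpr hy') hne'
    rw [SimpleGraph.compl_adj] at h2
    rw [SimpleGraph.compl_adj]
    exact ⟨hne, fun hadj => h2.2 ((SimpleGraph.comap_adj).mpr hadj)⟩

lemma greedy_card_bound {n : ℕ} {T : ℝ} (hn : 17 ≤ n) {e : ℝ} (he0 : 0 < e)
    (he : e ≤ (4:ℝ)⁻¹)
    (hT : (n:ℝ) ≤ T * ((n:ℝ) ^ ((2:ℝ)⁻¹) + 1)) : (n:ℝ) ^ e ≤ T := by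
  have hn0 : (0:ℝ) ≤ (n:ℝ) := Nat.cast_nonneg n
  have hn17 : (17:ℝ) ≤ (n:ℝ) := by exact_mod_cast hn
  set x := (n:ℝ) ^ ((4:ℝ)⁻¹) with hxdef
  have hx0 : 0 ≤ x := Real.rpow_nonneg hn0 _
  have hx4 : x ^ (4:ℕ) = (n:ℝ) := by
    rw [hxdef, ← Real.rpow_natCast ((n:ℝ) ^ ((4:ℝ)⁻¹)) 4, ← Real.rpow_mul hn0]
    norm_num
  have hx2 : x ^ (2:ℕ) = (n:ℝ) ^ ((2:ℝ)⁻¹) := by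
    rw [hxdef, ← Real.rpow_natCast ((n:ℝ) ^ ((4:ℝ)⁻¹)) 2, ← Real.rpow_mul hn0]
    norm_num
  have hx2' : (4:ℝ) ≤ x^(2:ℕ) := by
    by_contra hcon
    push_neg at hcon
    have h0 : (0:ℝ) ≤ x^(2:ℕ) := by positivity
    nlinarith [hx4]
  have hxge : 2 ≤ x := by
    by_contra hcon
    push_neg at hcon
    nlinarith [hx2']
  have hT' : x ^ (4:ℕ) ≤ T * (x^(2:ℕ) + 1) := by rw [hx4, hx2]; exact hT
  have hxle : x ≤ T := by
    have hcube : x^3 - x ≥ 0 := by nlinarith [hxge]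
    have h24 : x^4 ≥ 2*x^3 := by nlinarith [hxge, pow_nonneg hx0 3]
    nlinarith [hT', hcube, h24, hxge, sq_nonneg x]
  calc (n:ℝ) ^ e ≤ (n:ℝ) ^ ((4:ℝ)⁻¹) :=
        Real.rpow_le_rpow_of_exponent_le (by linarith) he
    _ = x := rfl
    _ ≤ T := hxle

lemma eh_key : ∀ (N p q : ℕ), 1 ≤ p → 1 ≤ q → p + q ≤ N →
    ∀ (V : Type) [Fintype V] (G : SimpleGraph V), ¬ HasW G p q →
    ∃ s : Finset V, (G.IsClique (↑s : Set V) ∨ Gᶜ.IsClique (↑s : Set V)) ∧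
      (Fintype.card V : ℝ) ^ ehEps N ≤ (s.card : ℝ) := by
  intro N
  induction N with
  | zero => intro p q hp hq hpq; omega
  | succ M IH =>
    intro p q hp hq hpq V _ G hW
    classical
    by_cases hn0 : Fintype.card V = 0
    · refine ⟨∅, Or.inl (by simp [SimpleGraph.isClique_iff]), ?_⟩
      rw [hn0]
      simp [Real.zero_rpow (ne_of_gt (ehEps_pos (M+1)))]
    have hn1 : 1 ≤ Fintype.card V := Nat.one_le_iff_ne_zero.mpr hn0
    have hn1R : (1:ℝ) ≤ (Fintype.card V : ℝ) := by exact_mod_cast hn1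
    have huniv : (Fintype.card V : ℝ) ^ ehEps (M+1) ≤ ((Finset.univ : Finset V).card : ℝ) := by
      rw [Finset.card_univ]
      calc (Fintype.card V : ℝ) ^ ehEps (M+1)
          ≤ (Fintype.card V : ℝ) ^ (1:ℝ) :=
            Real.rpow_le_rpow_of_exponent_le hn1R (ehEps_le_one _)
        _ = (Fintype.card V : ℝ) := Real.rpow_one _
    by_cases hbase : p = 1 ∨ q = 1
    · -- one-sided trivial witness means G has no edges at all
      have hnoedge : ∀ x y : V, ¬ G.Adj x y := by
        rcases hbase with h1 | h1
        · intro x y hxy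
          apply hW
          subst h1
          exact ⟨fun _ => x, fun _ => y, fun i j =>
            iff_of_true hxy (by have := i.is_lt; omega)⟩
        · intro x y hxy
          apply hW
          subst h1
          refine ⟨fun i => if (i:ℕ) = 0 then x else y, fun _ => y, fun i j => ?_⟩
          show G.Adj (if (i:ℕ) = 0 then x else y) y ↔ ((i:ℕ) ≤ (j:ℕ))
          have hj : (j:ℕ) = 0 := by have := j.is_lt; omega
          by_cases hi : (i:ℕ) = 0
          · rw [if_pos hi]
            exact iff_of_true hxy (by omega)
          · rw [if_neg hi]
            exact iff_of_false (G.irrefl) (by omega)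
      refine ⟨Finset.univ, Or.inr ?_, huniv⟩
      intro x _ y _ hne
      exact (SimpleGraph.compl_adj G x y).mpr ⟨hne, hnoedge x y⟩
    push_neg at hbase
    have hp2 : 2 ≤ p := by omega
    have hq2 : 2 ≤ q := by omega
    by_cases hn1' : Fintype.card V = 1
    · refine ⟨Finset.univ, Or.inl ?_, huniv⟩
      intro x _ y _ hne
      exact absurd (Fintype.card_le_one_iff.mp (le_of_eq hn1') x y) hne
    by_cases hn16 : Fintype.card V ≤ 16
    · obtain ⟨x, y, hxy⟩ := Fintype.exists_pair_of_one_lt_card (α := V) (by omega : 1 < Fintype.card V)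
      have hcard2 : ({x, y} : Finset V).card = 2 := Finset.card_pair hxy
      have hbound : (Fintype.card V : ℝ) ^ ehEps (M+1) ≤ 2 := by
        calc (Fintype.card V:ℝ) ^ ehEps (M+1)
            ≤ (Fintype.card V:ℝ) ^ ((4:ℝ)⁻¹) :=
              Real.rpow_le_rpow_of_exponent_le hn1R (ehEps_le_quarter _)
          _ ≤ (16:ℝ) ^ ((4:ℝ)⁻¹) :=
              Real.rpow_le_rpow (by positivity) (by exact_mod_cast hn16) (by norm_num)
          _ = 2 := by
              rw [show (16:ℝ) = (2:ℝ)^(4:ℕ) by norm_num, ← Real.rpow_natCast (2:ℝ) 4,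
                ← Real.rpow_mul (by norm_num)]
              norm_num
      have hmem2 : ∀ u, u ∈ (↑({x, y} : Finset V) : Set V) → u = x ∨ u = y := by
        intro u hu
        simpa using hu
      by_cases hadj : G.Adj x y
      · refine ⟨{x, y}, Or.inl ?_, ?_⟩
        · intro u hu v hv huv
          rcases hmem2 u hu with rfl | rfl <;> rcases hmem2 v hv with rfl | rfl
          · exact absurd rfl huv
          · exact hadj
          · exact hadj.symm
          · exact absurd rfl huv
        · rw [hcard2]; exact_mod_cast hbound
      · refine ⟨{x, y}, Or.inr ?_, ?_⟩
        · intro u hu v hv huv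
          rcases hmem2 u hu with rfl | rfl <;> rcases hmem2 v hv with rfl | rfl
          · exact absurd rfl huv
          · exact (SimpleGraph.compl_adj G _ _).mpr ⟨huv, hadj⟩
          · exact (SimpleGraph.compl_adj G _ _).mpr ⟨huv, fun h => hadj h.symm⟩
          · exact absurd rfl huv
        · rw [hcard2]; exact_mod_cast hbound
    have hn17 : 17 ≤ Fintype.card V := by omega
    by_cases hpq2 : p ≤ q
    · -- reduce q by passing to a large neighborhood, or G is sparse
      by_cases hex : ∃ v : V, (Fintype.card V : ℝ) ^ ((2:ℝ)⁻¹) ≤ (G.degree v : ℝ)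
      · obtain ⟨v, hv⟩ := hex
        set S : Set V := G.neighborSet v with hS
        have hWind : ¬ HasW (G.induce S) p (q-1) := by
          rintro ⟨a, b, hab⟩
          apply hW
          refine ⟨fun i => ((a i : S) : V),
            fun j => if h : (j:ℕ) < q - 1 then ((b ⟨(j:ℕ), h⟩ : S) : V) else v,
            fun i j => ?_⟩
          show G.Adj ((a i : S) : V)
              (if h : (j:ℕ) < q - 1 then ((b ⟨(j:ℕ), h⟩ : S) : V) else v) ↔ ((i:ℕ) ≤ (j:ℕ))
          by_cases hj : (j:ℕ) < q - 1
          · rw [dif_pos hj]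
            exact hab i ⟨(j:ℕ), hj⟩
          · rw [dif_neg hj]
            have hmemS : ((a i : S) : V) ∈ G.neighborSet v := (a i).2
            have hadj : G.Adj ((a i : S) : V) v :=
              ((SimpleGraph.mem_neighborSet G v _).mp hmemS).symm
            exact iff_of_true hadj (by have h1 := i.is_lt; have h2 := j.is_lt; omega)
        obtain ⟨s', hs', hcard'⟩ := IH p (q-1) hp (by omega) (by omega) ↥S (G.induce S) hWind
        obtain ⟨t, ht, htc⟩ := lift_clique G S s' hs'
        refine ⟨t, ht, ?_⟩
        rw [htc]
        have hScard : (Fintype.card ↥S : ℝ) = (G.degree v : ℝ) := by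
          exact_mod_cast congrArg Nat.cast (SimpleGraph.card_neighborSet_eq_degree G v)
        calc (Fintype.card V : ℝ) ^ ehEps (M+1)
            = ((Fintype.card V : ℝ) ^ ((2:ℝ)⁻¹)) ^ ehEps M := by
              rw [← Real.rpow_mul (by positivity), ← ehEps_succ]
          _ ≤ (Fintype.card ↥S : ℝ) ^ ehEps M := by
              apply Real.rpow_le_rpow (by positivity) _ (le_of_lt (ehEps_pos M))
              rw [hScard]; exact hv
          _ ≤ (s'.card : ℝ) := hcard'
      · push_neg at hex
        have hdegbound : ∀ v ∈ (Finset.univ : Finset V),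
            (((Finset.univ.filter (fun x => G.Adj v x)).card : ℝ))
              ≤ (Fintype.card V : ℝ) ^ ((2:ℝ)⁻¹) := by
          intro v _
          have : (Finset.univ.filter (fun x => G.Adj v x)) = G.neighborFinset v :=
            (SimpleGraph.neighborFinset_eq_filter G).symm
          rw [this]
          exact le_of_lt (hex v)
        obtain ⟨t, _, hind, htcard⟩ := greedy_indep G ((Fintype.card V : ℝ) ^ ((2:ℝ)⁻¹))
          (Fintype.card V) Finset.univ (le_of_eq Finset.card_univ) hdegbound
        refine ⟨t, Or.inr ?_, ?_⟩
        · intro a ha b hb hne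
          exact (SimpleGraph.compl_adj G _ _).mpr
            ⟨hne, hind a (Finset.mem_coe.mp ha) b (Finset.mem_coe.mp hb) hne⟩
        · exact greedy_card_bound hn17 (ehEps_pos _) (ehEps_le_quarter _)
            (by rwa [Finset.card_univ] at htcard)
    · -- p > q : reduce p by passing to a large non-neighborhood, or Gᶜ is sparse
      by_cases hex : ∃ v : V, (Fintype.card V : ℝ) ^ ((2:ℝ)⁻¹) ≤ ((Gᶜ).degree v : ℝ)
      · obtain ⟨v, hv⟩ := hex
        set S : Set V := (Gᶜ).neighborSet v with hS
        have hWind : ¬ HasW (G.induce S) (p-1) q := by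
          rintro ⟨a, b, hab⟩
          apply hW
          refine ⟨fun i => if h : (i:ℕ) < p - 1 then ((a ⟨(i:ℕ), h⟩ : S) : V) else v,
            fun j => ((b j : S) : V), fun i j => ?_⟩
          show G.Adj (if h : (i:ℕ) < p - 1 then ((a ⟨(i:ℕ), h⟩ : S) : V) else v)
              ((b j : S) : V) ↔ ((i:ℕ) ≤ (j:ℕ))
          by_cases hi : (i:ℕ) < p - 1
          · rw [dif_pos hi]
            exact hab ⟨(i:ℕ), hi⟩ j
          · rw [dif_neg hi]
            have hmemS : ((b j : S) : V) ∈ (Gᶜ).neighborSet v := (b j).2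
            have hcadj : (Gᶜ).Adj v ((b j : S) : V) :=
              (SimpleGraph.mem_neighborSet Gᶜ v _).mp hmemS
            have hnadj : ¬ G.Adj v ((b j : S) : V) :=
              ((SimpleGraph.compl_adj G _ _).mp hcadj).2
            exact iff_of_false hnadj (by have h1 := i.is_lt; have h2 := j.is_lt; omega)
        obtain ⟨s', hs', hcard'⟩ := IH (p-1) q (by omega) hq (by omega) ↥S (G.induce S) hWind
        obtain ⟨t, ht, htc⟩ := lift_clique G S s' hs'
        refine ⟨t, ht, ?_⟩
        rw [htc]
        have hScard : (Fintype.card ↥S : ℝ) = ((Gᶜ).degree v : ℝ) := by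
          exact_mod_cast congrArg Nat.cast (SimpleGraph.card_neighborSet_eq_degree Gᶜ v)
        calc (Fintype.card V : ℝ) ^ ehEps (M+1)
            = ((Fintype.card V : ℝ) ^ ((2:ℝ)⁻¹)) ^ ehEps M := by
              rw [← Real.rpow_mul (by positivity), ← ehEps_succ]
          _ ≤ (Fintype.card ↥S : ℝ) ^ ehEps M := by
              apply Real.rpow_le_rpow (by positivity) _ (le_of_lt (ehEps_pos M))
              rw [hScard]; exact hv
          _ ≤ (s'.card : ℝ) := hcard'
      · push_neg at hex
        have hdegbound : ∀ v ∈ (Finset.univ : Finset V),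
            (((Finset.univ.filter (fun x => (Gᶜ).Adj v x)).card : ℝ))
              ≤ (Fintype.card V : ℝ) ^ ((2:ℝ)⁻¹) := by
          intro v _
          have : (Finset.univ.filter (fun x => (Gᶜ).Adj v x)) = (Gᶜ).neighborFinset v :=
            (SimpleGraph.neighborFinset_eq_filter Gᶜ).symm
          rw [this]
          exact le_of_lt (hex v)
        obtain ⟨t, _, hind, htcard⟩ := greedy_indep Gᶜ ((Fintype.card V : ℝ) ^ ((2:ℝ)⁻¹))
          (Fintype.card V) Finset.univ (le_of_eq Finset.card_univ) hdegbound
        refine ⟨t, Or.inl ?_, ?_⟩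
        · intro a ha b hb hne
          by_contra hno
          exact hind a (Finset.mem_coe.mp ha) b (Finset.mem_coe.mp hb) hne
            ((SimpleGraph.compl_adj G _ _).mpr ⟨hne, hno⟩)
        · exact greedy_card_bound hn17 (ehEps_pos _) (ehEps_le_quarter _)
            (by rwa [Finset.card_univ] at htcard)

theorem erdos_hajnal_k_stable (k : ℕ) :
    ∃ ε : ℝ, 0 < ε ∧
      ∀ (V : Type) [Fintype V] (G : SimpleGraph V), KStable G k →
        ∃ s : Finset V, (G.IsClique (s : Set V) ∨ Gᶜ.IsClique (s : Set V)) ∧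
          (Fintype.card V : ℝ) ^ ε ≤ s.card := by
  refine ⟨ehEps (k + k), ehEps_pos _, ?_⟩
  intro V _ G hst
  rcases Nat.eq_zero_or_pos k with rfl | hk
  · exact (hst ⟨Fin.elim0, Fin.elim0, fun i => i.elim0⟩).elim
  · have hW : ¬ HasW G k k := by
      rintro ⟨a, b, hab⟩
      exact hst ⟨a, b, fun i j => (hab i j).trans Fin.le_def.symm⟩
    obtain ⟨s, hs, hcard⟩ := eh_key (k + k) k k hk hk le_rfl V G hW
    exact ⟨s, hs, hcard⟩
end

section
/- If a graph G contains an induced copy of C_6 (vertices 1,...,6) in which the vertices 2, 4, 6 are each duplicated by an adjacent twin (i.e., each of 2, 4, 6 is replaced by two adjacent vertices with the same neighbors on the cycle), together with a vertex x adjacent to all of 1,...,6 and a vertex y non-adjacent to all of 1,...,6, then G, as a set system of neighborhoods, has VC-dimension at least 3, witnessed by the shattering of the set {2, 4, 6}. -/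
/-- Adjacency of the 6-cycle on `Fin 6`. -/
def cycAdj (i j : Fin 6) : Prop :=
  (i.val + 1) % 6 = j.val ∨ (j.val + 1) % 6 = i.val

theorem config_gives_vc_dim_at_least_three {V : Type} (G : SimpleGraph V)
    (v : Fin 6 → V) (t2 t4 t6 x y : V)
    (hinj : Function.Injective v)
    (hcyc : ∀ i j, G.Adj (v i) (v j) ↔ cycAdj i j)
    -- `t2` is an adjacent twin of vertex 2 (= `v 1`): among the cycle it is
    -- adjacent exactly to vertices 1, 2, 3 (= `v 0`, `v 1`, `v 2`)
    (ht2 : ∀ j, G.Adj t2 (v j) ↔ (j = 0 ∨ j = 1 ∨ j = 2))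
    -- `t4` is an adjacent twin of vertex 4 (= `v 3`)
    (ht4 : ∀ j, G.Adj t4 (v j) ↔ (j = 2 ∨ j = 3 ∨ j = 4))
    -- `t6` is an adjacent twin of vertex 6 (= `v 5`)
    (ht6 : ∀ j, G.Adj t6 (v j) ↔ (j = 4 ∨ j = 5 ∨ j = 0))
    (hx : ∀ j, G.Adj x (v j))
    (hy : ∀ j, ¬ G.Adj y (v j)) :
    -- the triple (vertex 2, vertex 4, vertex 6) is shattered by neighborhoods,
    -- so `G` has VC-dimension at least 3
    ∃ w : Fin 3 → V, Function.Injective w ∧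
      (w 0 = v 1 ∧ w 1 = v 3 ∧ w 2 = v 5) ∧
      ∀ f : Fin 3 → Bool, ∃ a : V, ∀ i, G.Adj a (w i) ↔ f i = true := by
  refine ⟨![v 1, v 3, v 5], ?_, ⟨rfl, rfl, rfl⟩, ?_⟩
  · intro a b h
    fin_cases a <;> fin_cases b <;> simp_all [Matrix.cons_val_zero, Matrix.cons_val_one] <;>
      exact absurd (hinj h) (by decide)
  · intro f
    cases h0 : f 0 <;> cases h1 : f 1 <;> cases h2 : f 2
    · exact ⟨y, by intro i; fin_cases i <;> simp [h0, h1, h2, hy]⟩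
    · exact ⟨t6, by intro i; fin_cases i <;> simp [h0, h1, h2, ht6]⟩
    · exact ⟨t4, by intro i; fin_cases i <;> simp [h0, h1, h2, ht4]⟩
    · exact ⟨v 4, by intro i; fin_cases i <;> simp [h0, h1, h2, hcyc, cycAdj] <;> decide⟩
    · exact ⟨t2, by intro i; fin_cases i <;> simp [h0, h1, h2, ht2]⟩
    · exact ⟨v 0, by intro i; fin_cases i <;> simp [h0, h1, h2, hcyc, cycAdj] <;> decide⟩
    · exact ⟨v 2, by intro i; fin_cases i <;> simp [h0, h1, h2, hcyc, cycAdj] <;> decide⟩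
    · exact ⟨x, by intro i; fin_cases i <;> simp [h0, h1, h2, hx]⟩
end

section
/- Every finite 2-stable graph G on n ≥ 1 vertices contains a clique or an independent set of size at least n^{1/2}/2. -/
/-- A graph is `2`-stable if there are no `a₁, a₂, b₁, b₂` with
`E(aᵢ,bⱼ)` iff `i ≤ j`. -/
def TwoStable {V : Type} (G : SimpleGraph V) : Prop :=
  ¬ ∃ (a b : Fin 2 → V), ∀ i j, G.Adj (a i) (b j) ↔ i ≤ j

/-- In a 2-stable graph, two vertices with a common neighbor have equal
neighborhoods (one inclusion). -/
lemma TwoStable.key {V : Type} {G : SimpleGraph V} (h : TwoStable G)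
    {x u w y : V} (hxu : G.Adj x u) (hxw : G.Adj x w) (huy : G.Adj u y) :
    G.Adj w y := by
  by_contra hwy
  refine h ⟨![u, w], ![y, x], ?_⟩
  intro i j
  fin_cases i <;> fin_cases j <;>
    simp_all [Fin.le_def, hxu.symm, hxw.symm]

/-- A 2-stable graph has an independent set covering half of any vertex set. -/
lemma TwoStable.indep_half {V : Type} [DecidableEq V] {G : SimpleGraph V}
    [DecidableRel G.Adj] (h : TwoStable G) :
    ∀ (n : ℕ) (s : Finset V), s.card ≤ n →
      ∃ t ⊆ s, (∀ x ∈ t, ∀ y ∈ t, ¬ G.Adj x y) ∧ s.card ≤ 2 * t.card := by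
  intro n
  induction n with
  | zero =>
    intro s hs
    exact ⟨∅, Finset.empty_subset s, by simp, by omega⟩
  | succ n ih =>
    intro s hs
    rcases s.eq_empty_or_nonempty with rfl | ⟨v, hv⟩
    · exact ⟨∅, Finset.empty_subset _, by simp, by simp⟩
    by_cases hb : ∃ b, G.Adj v b
    · obtain ⟨b, hvb⟩ := hb
      set sA := s.filter (fun y => G.Adj b y) with hsA
      set sB := s.filter (fun y => G.Adj v y) with hsB
      -- basic facts
      have hvA : v ∈ sA := Finset.mem_filter.2 ⟨hv, hvb.symm⟩
      have hdisj : Disjoint sA sB := by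
        rw [Finset.disjoint_left]
        intro y hy1 hy2
        have h1 : G.Adj b y := (Finset.mem_filter.1 hy1).2
        have h2 : G.Adj v y := (Finset.mem_filter.1 hy2).2
        exact G.irrefl (h.key hvb h2 h1)
      have hAind : ∀ x ∈ sA, ∀ y ∈ sA, ¬ G.Adj x y := by
        intro x hx y hy hxy
        exact G.irrefl (h.key (Finset.mem_filter.1 hx).2 (Finset.mem_filter.1 hy).2 hxy)
      have hBind : ∀ x ∈ sB, ∀ y ∈ sB, ¬ G.Adj x y := by
        intro x hx y hy hxy
        exact G.irrefl (h.key (Finset.mem_filter.1 hx).2 (Finset.mem_filter.1 hy).2 hxy)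
      -- closure facts
      have hclA : ∀ a, G.Adj b a → ∀ y, G.Adj a y → G.Adj v y := by
        intro a ha y hay
        exact h.key ha hvb.symm hay
      have hclB : ∀ a, G.Adj v a → ∀ y, G.Adj a y → G.Adj b y := by
        intro a ha y hay
        exact h.key ha hvb hay
      -- the rest
      set s' := s \ (sA ∪ sB) with hs'
      have hsub : sA ∪ sB ⊆ s := by
        apply Finset.union_subset <;> exact Finset.filter_subset _ _
      have hcard' : s'.card = s.card - (sA.card + sB.card) := by
        rw [hs', Finset.card_sdiff_of_subset hsub, Finset.card_union_of_disjoint hdisj]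
      have hcardle : sA.card + sB.card ≤ s.card := by
        rw [← Finset.card_union_of_disjoint hdisj]
        exact Finset.card_le_card hsub
      have hAne : 1 ≤ sA.card := Finset.card_pos.2 ⟨v, hvA⟩
      have hs'le : s'.card ≤ n := by omega
      obtain ⟨t, hts, hind, hcard⟩ := ih s' hs'le
      have htnA : ∀ y ∈ t, y ∉ sA := fun y hy hyA =>
        (Finset.mem_sdiff.1 (hts hy)).2 (Finset.mem_union_left _ hyA)
      have htnB : ∀ y ∈ t, y ∉ sB := fun y hy hyB =>
        (Finset.mem_sdiff.1 (hts hy)).2 (Finset.mem_union_right _ hyB)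
      have hts'' : t ⊆ s := hts.trans (Finset.sdiff_subset)
      rcases le_total sB.card sA.card with hle | hle
      · -- take t ∪ sA
        refine ⟨t ∪ sA, Finset.union_subset hts'' (Finset.filter_subset _ _), ?_, ?_⟩
        · intro x hx y hy hxy
          rcases Finset.mem_union.1 hx with hx | hx <;>
            rcases Finset.mem_union.1 hy with hy | hy
          · exact hind x hx y hy hxy
          · -- x ∈ t, y ∈ sA : then Adj y x, so x ∈ N(v), so x ∈ sB
            have : G.Adj v x := hclA y (Finset.mem_filter.1 hy).2 x hxy.symm
            exact htnB x hx (Finset.mem_filter.2 ⟨hts'' hx, this⟩)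
          · have : G.Adj v y := hclA x (Finset.mem_filter.1 hx).2 y hxy
            exact htnB y hy (Finset.mem_filter.2 ⟨hts'' hy, this⟩)
          · exact hAind x hx y hy hxy
        · have hdtA : Disjoint t sA := Finset.disjoint_left.2 htnA
          rw [Finset.card_union_of_disjoint hdtA]
          omega
      · -- take t ∪ sB
        refine ⟨t ∪ sB, Finset.union_subset hts'' (Finset.filter_subset _ _), ?_, ?_⟩
        · intro x hx y hy hxy
          rcases Finset.mem_union.1 hx with hx | hx <;>
            rcases Finset.mem_union.1 hy with hy | hy
          · exact hind x hx y hy hxy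
          · have : G.Adj b x := hclB y (Finset.mem_filter.1 hy).2 x hxy.symm
            exact htnA x hx (Finset.mem_filter.2 ⟨hts'' hx, this⟩)
          · have : G.Adj b y := hclB x (Finset.mem_filter.1 hx).2 y hxy
            exact htnA y hy (Finset.mem_filter.2 ⟨hts'' hy, this⟩)
          · exact hBind x hx y hy hxy
        · have hdtB : Disjoint t sB := Finset.disjoint_left.2 htnB
          rw [Finset.card_union_of_disjoint hdtB]
          omega
    · -- v is isolated
      push_neg at hb
      obtain ⟨t, hts, hind, hcard⟩ := ih (s.erase v) (by
        have := Finset.card_erase_of_mem hv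
        omega)
      refine ⟨insert v t, ?_, ?_, ?_⟩
      · exact Finset.insert_subset hv (hts.trans (Finset.erase_subset _ _))
      · intro x hx y hy hxy
        rcases Finset.mem_insert.1 hx with rfl | hx
        · exact hb y hxy
        rcases Finset.mem_insert.1 hy with rfl | hy
        · exact hb x hxy.symm
        exact hind x hx y hy hxy
      · have hvt : v ∉ t := fun hvt => (Finset.mem_erase.1 (hts hvt)).1 rfl
        rw [Finset.card_insert_of_notMem hvt]
        have := Finset.card_erase_of_mem hv
        omega

theorem two_stable_homogeneous {V : Type} [Fintype V] (G : SimpleGraph V)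
    (hstable : TwoStable G) (hn : 1 ≤ Fintype.card V) :
    ∃ s : Finset V, (G.IsClique (s : Set V) ∨ Gᶜ.IsClique (s : Set V)) ∧
      (Fintype.card V : ℝ) ^ ((1 : ℝ) / 2) / 2 ≤ s.card := by
  classical
  obtain ⟨t, hts, hind, hcard⟩ :=
    hstable.indep_half (Fintype.card V) Finset.univ (by simp)
  refine ⟨t, Or.inr ?_, ?_⟩
  · intro x hx y hy hne
    exact (G.compl_adj x y).2 ⟨hne, hind x hx y hy⟩
  · have h1 : ((Fintype.card V : ℝ)) ^ ((1 : ℝ) / 2) ≤ (Fintype.card V : ℝ) := by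
      calc ((Fintype.card V : ℝ)) ^ ((1 : ℝ) / 2)
          ≤ (Fintype.card V : ℝ) ^ (1 : ℝ) :=
            Real.rpow_le_rpow_of_exponent_le (by exact_mod_cast hn) (by norm_num)
        _ = (Fintype.card V : ℝ) := Real.rpow_one _
    have h2 : (Fintype.card V : ℝ) ≤ 2 * t.card := by
      have : Fintype.card V ≤ 2 * t.card := by
        simpa [Finset.card_univ] using hcard
      exact_mod_cast this
    linarith
end

section
/- Let G = (V,E) be a finite graph of VC-dimension at most 1 and a_0 a vertex with neighborhood R and non-neighborhood L (excluding a_0). Suppose every vertex c ∈ R that 'splits' R (i.e., has both a neighbor and a non-neighbor in R) is adjacent to all of L. Let d_1 ∈ L split L, with L_1 = non-neighbors of d_1 in L and R_1 = neighbors of d_1 in L. Then it is impossible that: every vertex of L_1 splitting L_1 is adjacent to all of R_1, while some d_2 ∈ R_1 splits R_1, some d_3 ∈ R_1 is a non-neighbor of d_2, some c ∈ R splits R, and some d_4 ∈ L_1 splits L_1. -/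
/-- A graph has VC-dimension at most 1: no pair of distinct vertices is
shattered by vertex neighborhoods. -/
def VCDimLeOne {V : Type} (G : SimpleGraph V) : Prop :=
  ¬ ∃ u v : V, u ≠ v ∧
      ∀ f : Fin 2 → Bool, ∃ a : V,
        (G.Adj a u ↔ f 0 = true) ∧ (G.Adj a v ↔ f 1 = true)

/-- `s` splits `S` if `s` has a neighbor in `S` and a non-neighbor (other than
itself) in `S`. -/
def Splits {V : Type} (G : SimpleGraph V) (s : V) (S : Set V) : Prop :=
  (∃ x ∈ S, G.Adj x s) ∧ (∃ x ∈ S, x ≠ s ∧ ¬ G.Adj x s)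

theorem vc_dim_one_impossible_configuration {V : Type} [Fintype V]
    (G : SimpleGraph V) (hVC : VCDimLeOne G) (a0 : V)
    (L R : Set V)
    (hL : L = {x | x ≠ a0 ∧ ¬ G.Adj x a0})
    (hR : R = {x | x ≠ a0 ∧ G.Adj x a0})
    -- every vertex of `R` splitting `R` is adjacent to all of `L`
    (hRsplit : ∀ c ∈ R, Splits G c R → ∀ d ∈ L, G.Adj c d)
    (d1 : V) (hd1 : d1 ∈ L) (hd1split : Splits G d1 L)
    (L1 R1 : Set V)
    (hL1 : L1 = {x ∈ L | x ≠ d1 ∧ ¬ G.Adj x d1})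
    (hR1 : R1 = {x ∈ L | G.Adj x d1})
    -- every vertex of `L1` splitting `L1` is adjacent to all of `R1`
    (hL1split : ∀ x ∈ L1, Splits G x L1 → ∀ y ∈ R1, G.Adj x y)
    (d2 : V) (hd2 : d2 ∈ R1) (hd2split : Splits G d2 R1)
    (d3 : V) (hd3 : d3 ∈ R1) (hd3d2 : d3 ≠ d2 ∧ ¬ G.Adj d3 d2)
    (c : V) (hc : c ∈ R) (hcsplit : Splits G c R)
    (d4 : V) (hd4 : d4 ∈ L1) (hd4split : Splits G d4 L1) :
  False := by
  subst hL hR hL1 hR1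
  obtain ⟨hd3L, hd3adj⟩ := hd3
  obtain ⟨hd2L, hd2adj⟩ := hd2
  obtain ⟨hd4L, hd4ne, hd4nadj⟩ := hd4
  apply hVC
  refine ⟨d1, d3, ?_, ?_⟩
  · intro h; subst h; exact G.irrefl hd3adj
  · intro f
    cases h0 : f 0 <;> cases h1 : f 1
    · exact ⟨a0, by simp [h0]; exact fun h => hd1.2 h.symm,
        by simp [h1]; exact fun h => hd3L.2 h.symm⟩
    · exact ⟨d4, by simp [h0]; exact fun h => hd4nadj h,
        by simp [h1]; exact hL1split d4 ⟨hd4L, hd4ne, hd4nadj⟩ hd4split d3 ⟨hd3L, hd3adj⟩⟩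
    · exact ⟨d2, by simp [h0]; exact hd2adj,
        by simp [h1]; exact fun h => hd3d2.2 h.symm⟩
    · have hcall := hRsplit c hc hcsplit
      exact ⟨c, by simp [h0]; exact hcall d1 hd1, by simp [h1]; exact hcall d3 hd3L⟩
end

section
/- Let n ≥ 13 and 6 < m ≤ n. Suppose every m-element subset of an n-vertex graph G contains an induced C_6. Then there exist five vertices u_1, u_3, u_4, u_5, u_6 and a set S of at least (n−5)/(m(m−1)(m−2)(m−3)(m−4)(m−5)) vertices such that for every u_2 ∈ S, the six vertices u_1, u_2, u_3, u_4, u_5, u_6 induce a 6-cycle in that cyclic order. -/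
/-- `u 0, u 1, ..., u 5` induce a 6-cycle in `G` in this cyclic order. -/
def IsInducedC6Order {V : Type} (G : SimpleGraph V) (u : Fin 6 → V) : Prop :=
  Function.Injective u ∧ ∀ i j, G.Adj (u i) (u j) ↔ cycAdj i j

lemma key_id (n m : ℕ) (h6 : 6 ≤ m) (hmn : m ≤ n) :
    n.choose m * m.descFactorial 6 = n.descFactorial 6 * (n - 6).choose (m - 6) := by
  have h1 := Nat.choose_mul_factorial_mul_factorial hmn
  have h2 := Nat.choose_mul_factorial_mul_factorial (show m - 6 ≤ n - 6 by omega)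
  have h3 := Nat.factorial_mul_descFactorial (show 6 ≤ m from h6)
  have h4 := Nat.factorial_mul_descFactorial (show 6 ≤ n by omega)
  have e : n - 6 - (m - 6) = n - m := by omega
  rw [e] at h2
  apply Nat.eq_of_mul_eq_mul_right (Nat.mul_pos (Nat.factorial_pos (m - 6)) (Nat.factorial_pos (n - m)))
  calc n.choose m * m.descFactorial 6 * (Nat.factorial (m - 6) * Nat.factorial (n - m))
      = n.choose m * (Nat.factorial (m - 6) * m.descFactorial 6) * Nat.factorial (n - m) := by ring
    _ = n.choose m * Nat.factorial m * Nat.factorial (n - m) := by rw [h3]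
    _ = Nat.factorial n := h1
    _ = Nat.factorial (n - 6) * n.descFactorial 6 := h4.symm
    _ = ((n - 6).choose (m - 6) * Nat.factorial (m - 6) * Nat.factorial (n - m)) * n.descFactorial 6 := by rw [h2]
    _ = n.descFactorial 6 * (n - 6).choose (m - 6) * (Nat.factorial (m - 6) * Nat.factorial (n - m)) := by ring

theorem many_second_vertices {V : Type} [Fintype V] [DecidableEq V]
    (G : SimpleGraph V) (n m : ℕ) (hn : Fintype.card V = n)
    (hn13 : 13 ≤ n) (hm6 : 6 < m) (hmn : m ≤ n)
    (h : ∀ T : Finset V, T.card = m →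
      ∃ u : Fin 6 → V, (∀ i, u i ∈ T) ∧ IsInducedC6Order G u) :
    ∃ (u1 u3 u4 u5 u6 : V) (S : Finset V),
      ((n : ℝ) - 5) /
          ((m : ℝ) * ((m : ℝ) - 1) * ((m : ℝ) - 2) * ((m : ℝ) - 3) *
            ((m : ℝ) - 4) * ((m : ℝ) - 5)) ≤ (S.card : ℝ) ∧
      ∀ u2 ∈ S, IsInducedC6Order G ![u1, u2, u3, u4, u5, u6] := by
  classical
  set Ω : Finset (Fin 6 → V) :=
    Finset.univ.filter (fun u : Fin 6 → V => IsInducedC6Order G u) with hΩdef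
  have memΩ : ∀ u : Fin 6 → V, u ∈ Ω ↔ IsInducedC6Order G u := by
    intro u; simp [hΩdef]
  -- Step A: double counting
  have hA : n.choose m ≤ Ω.card * (n - 6).choose (m - 6) := by
    set P := Finset.powersetCard m (Finset.univ : Finset V) with hPdef
    have hsub : P ⊆ Ω.biUnion (fun u => P.filter (fun T => ∀ i, u i ∈ T)) := by
      intro T hT
      rw [hPdef, Finset.mem_powersetCard] at hT
      obtain ⟨u, hu1, hu2⟩ := h T hT.2
      rw [Finset.mem_biUnion]
      refine ⟨u, (memΩ u).2 hu2, ?_⟩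
      rw [Finset.mem_filter]
      exact ⟨by rw [hPdef, Finset.mem_powersetCard]; exact ⟨Finset.subset_univ T, hT.2⟩, hu1⟩
    have hbound : ∀ u ∈ Ω, (P.filter (fun T => ∀ i, u i ∈ T)).card ≤ (n - 6).choose (m - 6) := by
      intro u hu
      have huinj : Function.Injective u := ((memΩ u).1 hu).1
      set im : Finset V := Finset.image u Finset.univ with himdef
      have him : im.card = 6 := by
        rw [himdef, Finset.card_image_of_injective _ huinj, Finset.card_univ, Fintype.card_fin]
      have himsub : ∀ T ∈ P.filter (fun T => ∀ i, u i ∈ T), im ⊆ T := by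
        intro T hT x hx
        rw [Finset.mem_filter] at hT
        rw [himdef, Finset.mem_image] at hx
        obtain ⟨i, _, rfl⟩ := hx
        exact hT.2 i
      have := Finset.card_le_card_of_injOn (fun T => T \ im)
        (s := P.filter (fun T => ∀ i, u i ∈ T))
        (t := Finset.powersetCard (m - 6) (Finset.univ \ im))
        (fun T hT => by
          have hTsub := himsub T hT
          rw [Finset.mem_coe, Finset.mem_filter, hPdef, Finset.mem_powersetCard] at hT
          rw [Finset.mem_coe, Finset.mem_powersetCard]
          constructor
          · exact Finset.sdiff_subset_sdiff (Finset.subset_univ T) (le_refl im)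
          · rw [Finset.card_sdiff_of_subset hTsub, hT.1.2, him])
        (by
          intro T1 h1 T2 h2 he
          have e1 := Finset.sdiff_union_of_subset (himsub T1 h1)
          have e2 := Finset.sdiff_union_of_subset (himsub T2 h2)
          rw [← e1, ← e2]
          simp only at he
          rw [he])
      refine this.trans ?_
      rw [Finset.card_powersetCard, Finset.card_sdiff_of_subset (Finset.subset_univ im),
        Finset.card_univ, hn, him]
    calc n.choose m = P.card := by
          rw [hPdef, Finset.card_powersetCard, Finset.card_univ, hn]
      _ ≤ (Ω.biUnion (fun u => P.filter (fun T => ∀ i, u i ∈ T))).card :=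
          Finset.card_le_card hsub
      _ ≤ ∑ u ∈ Ω, (P.filter (fun T => ∀ i, u i ∈ T)).card := Finset.card_biUnion_le
      _ ≤ Ω.card • (n - 6).choose (m - 6) := Finset.sum_le_card_nsmul _ _ _ hbound
      _ = Ω.card * (n - 6).choose (m - 6) := by rw [smul_eq_mul]
  -- Ω is nonempty
  have hC'pos : 0 < (n - 6).choose (m - 6) := Nat.choose_pos (by omega)
  have hΩne : Ω.Nonempty := by
    rw [← Finset.card_pos]
    by_contra hc
    push_neg at hc
    interval_cases hΩc : Ω.card
    · simp [hΩc] at hA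
      have := Nat.choose_pos hmn
      omega
  -- base map
  set g : Fin 5 → Fin 6 := ![0, 2, 3, 4, 5] with hgdef
  have hginj : Function.Injective g := by decide
  set base : (Fin 6 → V) → (Fin 5 → V) := fun u => u ∘ g with hbasedef
  set B : Finset (Fin 5 → V) := Ω.image base with hBdef
  have hBcard : B.card ≤ n.descFactorial 5 := by
    have hBsub : B ⊆ Finset.univ.filter (fun f : Fin 5 → V => Function.Injective f) := by
      intro f hf
      rw [hBdef, Finset.mem_image] at hf
      obtain ⟨u, hu, rfl⟩ := hf
      rw [Finset.mem_filter]
      exact ⟨Finset.mem_univ _, (((memΩ u).1 hu).1).comp hginj⟩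
    refine (Finset.card_le_card hBsub).trans ?_
    have : (Finset.univ.filter (fun f : Fin 5 → V => Function.Injective f)).card
        = Fintype.card (Fin 5 ↪ V) := by
      rw [← Fintype.card_subtype]
      exact Fintype.card_congr (Equiv.subtypeInjectiveEquivEmbedding (Fin 5) V)
    rw [this, Fintype.card_embedding_eq, hn, Fintype.card_fin]
  -- choose the best base
  have hBne : B.Nonempty := hΩne.image base
  obtain ⟨b, hbB, hbmax⟩ :=
    Finset.exists_max_image B (fun b => (Ω.filter (fun u => base u = b)).card) hBne
  set F := (Ω.filter (fun u => base u = b)).card with hFdef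
  have hB2 : Ω.card ≤ B.card * F := by
    calc Ω.card = ∑ b' ∈ B, (Ω.filter (fun u => base u = b')).card := by
          rw [hBdef]; exact Finset.card_eq_sum_card_image base Ω
      _ ≤ B.card • F := Finset.sum_le_card_nsmul _ _ _ (fun b' hb' => hbmax b' hb')
      _ = B.card * F := by rw [smul_eq_mul]
  -- the ℕ inequality
  have hP5pos : 0 < n.descFactorial 5 := by
    by_contra hc
    push_neg at hc
    have h0 : n.descFactorial 5 = 0 := by omega
    have := Nat.factorial_mul_descFactorial (show 5 ≤ n by omega)
    rw [h0, Nat.mul_zero] at this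
    have := Nat.factorial_pos n; omega
  have hmain : n - 5 ≤ F * m.descFactorial 6 := by
    have h6 : n.descFactorial 6 = (n - 5) * n.descFactorial 5 := Nat.descFactorial_succ n 5
    have hchain : (n - 5) * (n.descFactorial 5 * (n - 6).choose (m - 6)) ≤
        (F * m.descFactorial 6) * (n.descFactorial 5 * (n - 6).choose (m - 6)) := by
      calc (n - 5) * (n.descFactorial 5 * (n - 6).choose (m - 6))
          = n.descFactorial 6 * (n - 6).choose (m - 6) := by rw [h6]; ring
        _ = n.choose m * m.descFactorial 6 := (key_id n m (by omega) hmn).symm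
        _ ≤ (Ω.card * (n - 6).choose (m - 6)) * m.descFactorial 6 :=
            Nat.mul_le_mul_right _ hA
        _ ≤ ((B.card * F) * (n - 6).choose (m - 6)) * m.descFactorial 6 := by
            exact Nat.mul_le_mul_right _ (Nat.mul_le_mul_right _ hB2)
        _ ≤ ((n.descFactorial 5 * F) * (n - 6).choose (m - 6)) * m.descFactorial 6 := by
            exact Nat.mul_le_mul_right _ (Nat.mul_le_mul_right _ (Nat.mul_le_mul_right _ hBcard))
        _ = (F * m.descFactorial 6) * (n.descFactorial 5 * (n - 6).choose (m - 6)) := by ring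
    exact Nat.le_of_mul_le_mul_right hchain (Nat.mul_pos hP5pos hC'pos)
  -- build S
  set S : Finset V := (Ω.filter (fun u => base u = b)).image (fun u => u 1) with hSdef
  have hScard : S.card = F := by
    rw [hSdef, hFdef]
    apply Finset.card_image_of_injOn
    intro u hu u' hu' he
    rw [Finset.mem_coe, Finset.mem_filter] at hu hu'
    have key : ∀ j : Fin 5, u (g j) = u' (g j) := by
      intro j
      have : base u = base u' := hu.2.trans hu'.2.symm
      exact congrFun this j
    funext i
    fin_cases i
    · simpa [hgdef] using key 0
    · exact he
    · simpa [hgdef] using key 1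
    · simpa [hgdef] using key 2
    · simpa [hgdef] using key 3
    · simpa [hgdef] using key 4
  refine ⟨b 0, b 1, b 2, b 3, b 4, S, ?_, ?_⟩
  · -- the cardinality inequality over ℝ
    have hDcast : ((m : ℝ) * ((m : ℝ) - 1) * ((m : ℝ) - 2) * ((m : ℝ) - 3) *
        ((m : ℝ) - 4) * ((m : ℝ) - 5)) = (m.descFactorial 6 : ℝ) := by
      have e : m.descFactorial 6 = (m - 5) * ((m - 4) * ((m - 3) * ((m - 2) * ((m - 1) * m)))) := by
        simp [Nat.descFactorial_succ, Nat.descFactorial_zero]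
      rw [e]
      push_cast
      rw [Nat.cast_sub (by omega : 5 ≤ m), Nat.cast_sub (by omega : 4 ≤ m),
        Nat.cast_sub (by omega : 3 ≤ m), Nat.cast_sub (by omega : 2 ≤ m),
        Nat.cast_sub (by omega : 1 ≤ m)]
      push_cast
      ring
    rw [hDcast, hScard]
    have hDpos : (0 : ℝ) < (m.descFactorial 6 : ℝ) := by
      have : 0 < m.descFactorial 6 := by
        by_contra hc
        push_neg at hc
        have h0 : m.descFactorial 6 = 0 := by omega
        have := Nat.factorial_mul_descFactorial (show 6 ≤ m by omega)
        rw [h0, Nat.mul_zero] at this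
        have := Nat.factorial_pos m; omega
      exact_mod_cast this
    rw [div_le_iff₀ hDpos]
    have : ((n - 5 : ℕ) : ℝ) ≤ ((F * m.descFactorial 6 : ℕ) : ℝ) := by exact_mod_cast hmain
    rw [Nat.cast_sub (by omega : 5 ≤ n), Nat.cast_mul] at this
    push_cast at this ⊢
    linarith
  · intro u2 hu2
    rw [hSdef, Finset.mem_image] at hu2
    obtain ⟨u, hu, rfl⟩ := hu2
    rw [Finset.mem_filter] at hu
    have hbase : base u = b := hu.2
    have hkey : ∀ j : Fin 5, b j = u (g j) := fun j => (congrFun hbase j).symm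
    have heq : ![b 0, u 1, b 1, b 2, b 3, b 4] = u := by
      funext i
      fin_cases i
      · simpa [hgdef] using (hkey 0)
      · rfl
      · simpa [hgdef] using (hkey 1)
      · simpa [hgdef] using (hkey 2)
      · simpa [hgdef] using (hkey 3)
      · simpa [hgdef] using (hkey 4)
    rw [heq]
    exact (memΩ u).1 hu.1
end

section
/- Let G be a graph with at least 2 vertices such that neither G nor its complement contains an induced 6-cycle with each of the three alternate vertices 2, 4, 6 duplicated by adjacent twins (the 9-vertex configuration described below). If additionally the family of {C_6, complement-of-C_6}-free graphs has the Erdős–Hajnal property with exponent c > 0, then there is ε > 0 depending only on c such that G contains a clique or independent set of size |V(G)|^ε. -/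
/-- `G` contains an induced copy of the 6-cycle `C₆`. -/
def HasInducedC6 {V : Type} (G : SimpleGraph V) : Prop :=
  ∃ v : Fin 6 → V, Function.Injective v ∧ ∀ i j, G.Adj (v i) (v j) ↔ cycAdj i j

/-- `G` contains the 9-vertex configuration: an induced 6-cycle `v 0, ..., v 5`
together with adjacent twins `t2, t4, t6` of the alternate vertices
`v 1, v 3, v 5`, where each twin is adjacent (among the cycle vertices) exactly
to its original and the two cycle-neighbors of its original; the adjacencies
among the twins are arbitrary. -/
def HasConfig {V : Type} (G : SimpleGraph V) : Prop :=
  ∃ (v : Fin 6 → V) (t2 t4 t6 : V),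
    Function.Injective v ∧
    (∀ i j, G.Adj (v i) (v j) ↔ cycAdj i j) ∧
    (∀ i, t2 ≠ v i) ∧ (∀ i, t4 ≠ v i) ∧ (∀ i, t6 ≠ v i) ∧
    t2 ≠ t4 ∧ t2 ≠ t6 ∧ t4 ≠ t6 ∧
    (∀ j, G.Adj t2 (v j) ↔ (j = 0 ∨ j = 1 ∨ j = 2)) ∧
    (∀ j, G.Adj t4 (v j) ↔ (j = 2 ∨ j = 3 ∨ j = 4)) ∧
    (∀ j, G.Adj t6 (v j) ↔ (j = 4 ∨ j = 5 ∨ j = 0))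

instance : DecidableRel cycAdj := fun i j =>
  inferInstanceAs (Decidable (_ ∨ _))


/-- the 6-cycle as a simple graph -/
def C6G : SimpleGraph (Fin 6) where
  Adj := cycAdj
  symm := by constructor; intro i j h; unfold cycAdj at *; tauto
  loopless := by constructor; intro i h; rcases h with h|h <;> omega

instance : DecidableRel C6G.Adj := fun i j => inferInstanceAs (Decidable (cycAdj i j))

/-- projection used to define `extendTwin` -/
def twdown {p : ℕ} (x : Fin p) (i : Fin (p+1)) : Fin p :=
  if h : (i : ℕ) < p then ⟨i, h⟩ else x

/-- `P` together with one new vertex which is an adjacent twin of `x`. -/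
def extendTwin {p : ℕ} (P : SimpleGraph (Fin p)) (x : Fin p) : SimpleGraph (Fin (p+1)) where
  Adj i j := i ≠ j ∧ (P.Adj (twdown x i) (twdown x j) ∨ twdown x i = twdown x j)
  symm := by
    constructor
    intro i j ⟨h1, h2⟩
    exact ⟨h1.symm, by tauto⟩
  loopless := by constructor; intro i h; exact h.1 rfl

instance {p : ℕ} (P : SimpleGraph (Fin p)) [DecidableRel P.Adj] (x : Fin p) :
    DecidableRel (extendTwin P x).Adj := fun i j =>
  inferInstanceAs (Decidable (_ ∧ (_ ∨ _)))

@[simp] lemma twdown_castSucc {p : ℕ} (x : Fin p) (i : Fin p) :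
    twdown x (Fin.castSucc i) = i := by
  simp [twdown, i.isLt]

@[simp] lemma twdown_last {p : ℕ} (x : Fin p) : twdown x (Fin.last p) = x := by
  simp [twdown]

lemma extendTwin_adj_cast {p : ℕ} (P : SimpleGraph (Fin p)) (x : Fin p) (i j : Fin p) :
    (extendTwin P x).Adj (Fin.castSucc i) (Fin.castSucc j) ↔ P.Adj i j := by
  constructor
  · rintro ⟨h1, h2 | h2⟩
    · simpa using h2
    · simp only [twdown_castSucc] at h2
      exact absurd (congrArg Fin.castSucc h2) h1
  · intro h
    exact ⟨fun he => P.loopless.irrefl i (by cases Fin.castSucc_injective _ he; exact h),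
      Or.inl (by simpa using h)⟩

lemma extendTwin_adj_last {p : ℕ} (P : SimpleGraph (Fin p)) (x : Fin p) (j : Fin p) :
    (extendTwin P x).Adj (Fin.last p) (Fin.castSucc j) ↔ (P.Adj x j ∨ x = j) := by
  have hne : Fin.last p ≠ Fin.castSucc j := by
    intro h
    have := congrArg Fin.val h
    simp at this
    omega
  constructor
  · rintro ⟨h1, h2⟩; simpa using h2
  · intro h; exact ⟨hne, by simpa using h⟩

/-- `f` is an induced (ordered) copy of the pattern `P` inside `G`. -/
def IsCopy {V : Type} {p : ℕ} (G : SimpleGraph V) (P : SimpleGraph (Fin p))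
    (f : Fin p → V) : Prop :=
  Function.Injective f ∧ ∀ i j, G.Adj (f i) (f j) ↔ P.Adj i j

/-- the Erdős–Hajnal property with exponent `ε` for graphs avoiding `P`
(in both the graph and its complement). -/
def EHProp (p : ℕ) (P : SimpleGraph (Fin p)) (ε : ℝ) : Prop :=
  ∀ (V : Type) [Fintype V] (G : SimpleGraph V),
    (¬ ∃ f, IsCopy G P f) → (¬ ∃ f, IsCopy Gᶜ P f) →
    ∃ s : Finset V, (G.IsClique (s : Set V) ∨ Gᶜ.IsClique (s : Set V)) ∧
      (Fintype.card V : ℝ) ^ ε ≤ s.card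

/-- the 7-vertex pattern: C6 plus a twin of vertex 1 -/
def P7 : SimpleGraph (Fin 7) := extendTwin C6G 1
/-- plus a twin of vertex 3 -/
def P8 : SimpleGraph (Fin 8) := extendTwin P7 3
/-- plus a twin of vertex 5 : the 9-vertex configuration -/
def P9 : SimpleGraph (Fin 9) := extendTwin P8 5

instance : DecidableRel P7.Adj := fun i j => inferInstanceAs (Decidable ((extendTwin C6G 1).Adj i j))
instance : DecidableRel P8.Adj := fun i j => inferInstanceAs (Decidable ((extendTwin P7 3).Adj i j))
instance : DecidableRel P9.Adj := fun i j => inferInstanceAs (Decidable ((extendTwin P8 5).Adj i j))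

lemma p9_cycle : ∀ i j : Fin 6, P9.Adj (Fin.castLE (by omega) i) (Fin.castLE (by omega) j) ↔ cycAdj i j := by decide

lemma p9_t2 : ∀ j : Fin 6, P9.Adj 6 (Fin.castLE (by omega) j) ↔ (j = 0 ∨ j = 1 ∨ j = 2) := by decide
lemma p9_t4 : ∀ j : Fin 6, P9.Adj 7 (Fin.castLE (by omega) j) ↔ (j = 2 ∨ j = 3 ∨ j = 4) := by decide
lemma p9_t6 : ∀ j : Fin 6, P9.Adj 8 (Fin.castLE (by omega) j) ↔ (j = 4 ∨ j = 5 ∨ j = 0) := by decide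

lemma copy_p9_hasConfig {V : Type} (G : SimpleGraph V) (f : Fin 9 → V)
    (hf : IsCopy G P9 f) : HasConfig G := by
  obtain ⟨hinj, hadj⟩ := hf
  refine ⟨fun i => f (Fin.castLE (by omega) i), f 6, f 7, f 8, ?_, ?_, ?_, ?_, ?_, ?_, ?_, ?_, ?_, ?_, ?_⟩
  · exact hinj.comp (Fin.castLE_injective _)
  · intro i j; rw [hadj]; exact p9_cycle i j
  · intro i; exact fun h => absurd (hinj h) (by have := i.isLt; intro hh; have := congrArg Fin.val hh; simp [Fin.castLE] at this; omega)
  · intro i; exact fun h => absurd (hinj h) (by have := i.isLt; intro hh; have := congrArg Fin.val hh; simp [Fin.castLE] at this; omega)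
  · intro i; exact fun h => absurd (hinj h) (by have := i.isLt; intro hh; have := congrArg Fin.val hh; simp [Fin.castLE] at this; omega)
  · exact fun h => absurd (hinj h) (by decide)
  · exact fun h => absurd (hinj h) (by decide)
  · exact fun h => absurd (hinj h) (by decide)
  · intro j; rw [hadj]; exact p9_t2 j
  · intro j; rw [hadj]; exact p9_t4 j
  · intro j; rw [hadj]; exact p9_t6 j

section Machinery
variable {p : ℕ} {V : Type} [Fintype V]

open Finset

attribute [local instance 10] Classical.propDecidable

/-- a partial copy of `P` missing the vertex `x`. -/
def PartCopy (H : SimpleGraph V) (P : SimpleGraph (Fin p)) (x : Fin p)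
    (t : {i : Fin p // i ≠ x} → V) : Prop :=
  Function.Injective t ∧ ∀ i j : {i : Fin p // i ≠ x}, H.Adj (t i) (t j) ↔ P.Adj i.val j.val

/-- the set of vertices completing a partial copy at slot `x`. -/
noncomputable def ExtSet (H : SimpleGraph V) (P : SimpleGraph (Fin p)) (x : Fin p)
    (t : {i : Fin p // i ≠ x} → V) : Finset V :=
  Finset.univ.filter (fun u => (∀ i, u ≠ t i) ∧
    ∀ i : {i : Fin p // i ≠ x}, (H.Adj u (t i) ↔ P.Adj x i.val))

/-- the finset of induced ordered copies of `P` in `H`. -/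
noncomputable def copyF (H : SimpleGraph V) (P : SimpleGraph (Fin p)) : Finset (Fin p → V) :=
  Finset.univ.filter (fun f => IsCopy H P f)

/-- copies lying inside `S`. -/
noncomputable def copyIn (H : SimpleGraph V) (P : SimpleGraph (Fin p)) (S : Finset V) :
    Finset (Fin p → V) :=
  (copyF H P).filter (fun f => ∀ i, f i ∈ S)

lemma ext_indep (H : SimpleGraph V) (P : SimpleGraph (Fin p)) (x : Fin p)
    (hfree : ¬ ∃ g, IsCopy H (extendTwin P x) g)
    (t : {i : Fin p // i ≠ x} → V) (ht : PartCopy H P x t) :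
    ∀ u ∈ ExtSet H P x t, ∀ u' ∈ ExtSet H P x t, u ≠ u' → ¬ H.Adj u u' := by
  intro u hu u' hu' hne hadj
  rw [ExtSet, Finset.mem_filter] at hu hu'
  obtain ⟨-, hu1, hu2⟩ := hu
  obtain ⟨-, hu'1, hu'2⟩ := hu'
  apply hfree
  set g : Fin (p+1) → V :=
    fun k => Fin.lastCases u' (fun i => if h2 : i = x then u else t ⟨i, h2⟩) k with hg
  have hglast : g (Fin.last p) = u' := by simp [hg]
  have hgcast : ∀ i : Fin p, g (Fin.castSucc i) = if h2 : i = x then u else t ⟨i, h2⟩ := by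
    intro i; simp [hg]
  have key : ∀ j : Fin p, H.Adj u' (g (Fin.castSucc j)) ↔ (P.Adj x j ∨ x = j) := by
    intro j
    rw [hgcast]
    by_cases h2 : j = x
    · rw [dif_pos h2]
      constructor
      · intro _; exact Or.inr h2.symm
      · intro _; exact hadj.symm
    · rw [dif_neg h2]
      rw [hu'2 ⟨j, h2⟩]
      constructor
      · exact Or.inl
      · rintro (h | h)
        · exact h
        · exact absurd h.symm h2
  refine ⟨g, ?_, ?_⟩
  · -- injectivity
    intro a b hab
    induction a using Fin.lastCases with
    | last =>
      induction b using Fin.lastCases with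
      | last => rfl
      | cast j =>
        rw [hglast, hgcast] at hab
        by_cases h2 : j = x
        · rw [dif_pos h2] at hab; exact absurd hab.symm hne
        · rw [dif_neg h2] at hab; exact absurd hab (hu'1 _)
    | cast i =>
      induction b using Fin.lastCases with
      | last =>
        rw [hglast, hgcast] at hab
        by_cases h2 : i = x
        · rw [dif_pos h2] at hab; exact absurd hab hne
        · rw [dif_neg h2] at hab; exact absurd hab.symm (hu'1 _)
      | cast j =>
        rw [hgcast, hgcast] at hab
        by_cases h2 : i = x <;> by_cases h3 : j = x
        · subst h2; subst h3; rfl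
        · rw [dif_pos h2, dif_neg h3] at hab; exact absurd hab (hu1 _)
        · rw [dif_neg h2, dif_pos h3] at hab; exact absurd hab.symm (hu1 _)
        · rw [dif_neg h2, dif_neg h3] at hab
          have := ht.1 hab
          have : i = j := congrArg Subtype.val this
          exact congrArg Fin.castSucc this
  · -- adjacency
    intro a b
    induction a using Fin.lastCases with
    | last =>
      induction b using Fin.lastCases with
      | last =>
        rw [hglast]
        simp [SimpleGraph.irrefl]
      | cast j =>
        rw [hglast, extendTwin_adj_last]
        exact key j
    | cast i =>
      induction b using Fin.lastCases with
      | last =>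
        rw [hglast, H.adj_comm, (extendTwin P x).adj_comm, extendTwin_adj_last]
        exact key i
      | cast j =>
        rw [extendTwin_adj_cast]
        rw [hgcast, hgcast]
        by_cases h2 : i = x <;> by_cases h3 : j = x
        · subst h2; subst h3; simp [dif_pos rfl, SimpleGraph.irrefl]
        · subst h2
          rw [dif_pos rfl, dif_neg h3]
          exact hu2 ⟨j, h3⟩
        · subst h3
          rw [dif_neg h2, dif_pos rfl, H.adj_comm, P.adj_comm]
          exact hu2 ⟨i, h2⟩
        · rw [dif_neg h2, dif_neg h3]
          exact ht.2 ⟨i, h2⟩ ⟨j, h3⟩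

lemma card_ne_subtype (x : Fin p) : Fintype.card {i : Fin p // i ≠ x} = p - 1 := by
  have := Fintype.card_subtype_compl (fun i : Fin p => i = x)
  simp only [Fintype.card_subtype_eq, Fintype.card_fin] at this
  exact this

lemma copy_count (H : SimpleGraph V) (P : SimpleGraph (Fin p)) (x : Fin p) (s : ℕ)
    (hext : ∀ t, PartCopy H P x t → (ExtSet H P x t).card ≤ s) :
    (copyF H P).card ≤ Fintype.card V ^ (p - 1) * s := by
  classical
  rw [copyF]
  set cs := (Finset.univ.filter (fun f => IsCopy H P f) : Finset (Fin p → V)) with hcs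
  have hfib := Finset.card_eq_sum_card_fiberwise
    (f := fun (f : Fin p → V) (i : {i : Fin p // i ≠ x}) => f i.val)
    (s := cs) (t := Finset.univ) (fun f _ => Finset.mem_univ _)
  rw [hfib]
  have hbound : ∀ t ∈ (Finset.univ : Finset ({i : Fin p // i ≠ x} → V)),
      (cs.filter (fun f => (fun i : {i : Fin p // i ≠ x} => f i.val) = t)).card ≤ s := by
    intro t _
    rcases Finset.eq_empty_or_nonempty
      (cs.filter (fun f => (fun i : {i : Fin p // i ≠ x} => f i.val) = t)) with he | ⟨f0, hf0⟩
    · rw [he]; simp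
    · rw [Finset.mem_filter] at hf0
      obtain ⟨hf0cs, hf0t⟩ := hf0
      rw [hcs, Finset.mem_filter] at hf0cs
      obtain ⟨-, hf0inj, hf0adj⟩ := hf0cs
      have hpc : PartCopy H P x t := by
        constructor
        · intro i j hij
          rw [← hf0t] at hij
          exact Subtype.ext (hf0inj hij)
        · intro i j
          rw [← hf0t]
          exact hf0adj i.val j.val
      calc (cs.filter (fun f => (fun i : {i : Fin p // i ≠ x} => f i.val) = t)).card
          ≤ (ExtSet H P x t).card := by
            apply Finset.card_le_card_of_injOn (fun f => f x)
            · intro f hf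
              rw [Finset.mem_coe, Finset.mem_filter] at hf
              obtain ⟨hfcs, hft⟩ := hf
              rw [hcs, Finset.mem_filter] at hfcs
              obtain ⟨-, hfinj, hfadj⟩ := hfcs
              rw [Finset.mem_coe, ExtSet, Finset.mem_filter]
              refine ⟨Finset.mem_univ _, ?_, ?_⟩
              · intro i
                rw [← hft]
                intro h
                exact i.prop.symm (hfinj h)
              · intro i
                rw [← hft]
                exact hfadj x i.val
            · intro f hf g hg hfg
              rw [Finset.mem_coe, Finset.mem_filter] at hf hg
              funext k
              by_cases hk : k = x
              · subst hk; exact hfg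
              · have := congrFun (hf.2.trans hg.2.symm) ⟨k, hk⟩
                exact this
        _ ≤ s := hext t hpc
  calc ∑ t : ({i : Fin p // i ≠ x} → V),
        (cs.filter (fun f => (fun i : {i : Fin p // i ≠ x} => f i.val) = t)).card
      ≤ (Finset.univ : Finset ({i : Fin p // i ≠ x} → V)).card • s :=
        Finset.sum_le_card_nsmul _ _ _ hbound
    _ = Fintype.card V ^ (p - 1) * s := by
        rw [smul_eq_mul, Finset.card_univ, Fintype.card_fun, card_ne_subtype]

end Machinery

section Counting
variable {V : Type} [Fintype V]
open Finset

attribute [local instance 10] Classical.propDecidable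

lemma card_supersets (t : Finset V) (m : ℕ) (ht : t.card ≤ m) :
    ((Finset.univ.powersetCard m).filter (fun S => t ⊆ S)).card
      = (Fintype.card V - t.card).choose (m - t.card) := by
  classical
  rw [← Finset.card_univ_diff t, ← Finset.card_powersetCard]
  apply Finset.card_bij' (i := fun S _ => S \ t) (j := fun A _ => A ∪ t)
  · intro S hS
    rw [Finset.mem_filter, Finset.mem_powersetCard] at hS
    obtain ⟨⟨-, hcard⟩, hsub⟩ := hS
    rw [Finset.mem_powersetCard]
    constructor
    · exact Finset.sdiff_subset_sdiff (Finset.subset_univ _) (le_refl t)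
    · rw [Finset.card_sdiff_of_subset hsub, hcard]
  · intro A hA
    rw [Finset.mem_powersetCard] at hA
    obtain ⟨hAsub, hAcard⟩ := hA
    have hdisj : Disjoint A t := by
      rw [Finset.disjoint_right]
      intro a hat haA
      have := hAsub haA
      rw [Finset.mem_sdiff] at this
      exact this.2 hat
    rw [Finset.mem_filter, Finset.mem_powersetCard]
    refine ⟨⟨Finset.subset_univ _, ?_⟩, Finset.subset_union_right⟩
    rw [Finset.card_union_of_disjoint hdisj, hAcard]
    omega
  · intro S hS
    rw [Finset.mem_filter] at hS
    exact Finset.sdiff_union_of_subset hS.2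
  · intro A hA
    rw [Finset.mem_powersetCard] at hA
    have hdisj : Disjoint A t := by
      rw [Finset.disjoint_right]
      intro a hat haA
      have := hA.1 haA
      rw [Finset.mem_sdiff] at this
      exact this.2 hat
    rw [Finset.union_sdiff_right]
    exact Finset.sdiff_eq_self_of_disjoint hdisj

lemma avg_copies {p : ℕ} (H : SimpleGraph V) (P : SimpleGraph (Fin p)) (m : ℕ) (hpm : p ≤ m) :
    ∑ S ∈ Finset.univ.powersetCard m, (copyIn H P S).card
      = (copyF H P).card * (Fintype.card V - p).choose (m - p) := by
  classical
  simp only [copyIn, copyF]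
  set cs := (Finset.univ.filter (fun f => IsCopy H P f) : Finset (Fin p → V)) with hcs
  have step1 : ∀ S : Finset V,
      (cs.filter (fun f => ∀ i, f i ∈ S)).card = ∑ f ∈ cs, if (∀ i, f i ∈ S) then 1 else 0 :=
    fun S => Finset.card_filter _ _
  calc ∑ S ∈ Finset.univ.powersetCard m, (cs.filter (fun f => ∀ i, f i ∈ S)).card
      = ∑ S ∈ Finset.univ.powersetCard m, ∑ f ∈ cs, if (∀ i, f i ∈ S) then 1 else 0 := by
        exact Finset.sum_congr rfl (fun S _ => step1 S)
    _ = ∑ f ∈ cs, ∑ S ∈ Finset.univ.powersetCard m, if (∀ i, f i ∈ S) then 1 else 0 :=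
        Finset.sum_comm
    _ = ∑ f ∈ cs, (Fintype.card V - p).choose (m - p) := by
        apply Finset.sum_congr rfl
        intro f hf
        rw [hcs, Finset.mem_filter] at hf
        have hinj : Function.Injective f := hf.2.1
        have hcard : (Finset.image f Finset.univ).card = p := by
          rw [Finset.card_image_of_injective _ hinj, Finset.card_univ, Fintype.card_fin]
        have : ∀ S : Finset V, (∀ i, f i ∈ S) ↔ (Finset.image f Finset.univ ⊆ S) := by
          intro S
          rw [Finset.image_subset_iff]
          exact ⟨fun h i _ => h i, fun h i => h i (Finset.mem_univ i)⟩
        calc ∑ S ∈ Finset.univ.powersetCard m, (if (∀ i, f i ∈ S) then 1 else 0)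
            = ∑ S ∈ Finset.univ.powersetCard m,
                (if Finset.image f Finset.univ ⊆ S then 1 else 0) := by
              apply Finset.sum_congr rfl
              intro S _
              simp only [this S]
          _ = ((Finset.univ.powersetCard m).filter
                (fun S => Finset.image f Finset.univ ⊆ S)).card :=
              (Finset.card_filter _ _).symm
          _ = (Fintype.card V - p).choose (m - p) := by
              rw [card_supersets _ m (by omega), hcard]
    _ = cs.card * (Fintype.card V - p).choose (m - p) := by
        rw [Finset.sum_const, smul_eq_mul]

lemma chooseaux : ∀ (q m n : ℕ), q ≤ m → m ≤ n →
    (n - q).choose (m - q) * (n - q) ^ q ≤ n.choose m * m ^ q := by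
  intro q
  induction q with
  | zero => intro m n _ _; simp
  | succ q ih =>
    intro m n hqm hmn
    set a := n - q with ha
    set b := m - q with hb
    have hb1 : 1 ≤ b := by omega
    have hba : b ≤ a := by omega
    have ha1 : 1 ≤ a := le_trans hb1 hba
    have key : a * (a-1).choose (b-1) = a.choose b * b := by
      have := Nat.add_one_mul_choose_eq (a-1) (b-1)
      have h1 : (a-1)+1 = a := by omega
      have h2 : (b-1)+1 = b := by omega
      rw [h1, h2] at this
      exact this
    have e1 : n - (q+1) = a - 1 := by omega
    have e2 : m - (q+1) = b - 1 := by omega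
    calc (n - (q+1)).choose (m - (q+1)) * (n - (q+1)) ^ (q+1)
        = ((a-1).choose (b-1) * (a-1)) * (a-1) ^ q := by rw [e1, e2]; ring
      _ ≤ ((a-1).choose (b-1) * a) * a ^ q := by
          apply Nat.mul_le_mul
          · exact Nat.mul_le_mul_left _ (by omega)
          · exact Nat.pow_le_pow_left (by omega) q
      _ = (a.choose b * b) * a ^ q := by rw [← key]; ring
      _ ≤ (a.choose b * m) * a ^ q := by
          apply Nat.mul_le_mul_right
          exact Nat.mul_le_mul_left _ (by omega)
      _ = m * (a.choose b * a ^ q) := by ring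
      _ ≤ m * (n.choose m * m ^ q) := by
          apply Nat.mul_le_mul_left
          exact ih m n (by omega) hmn
      _ = n.choose m * m ^ (q+1) := by ring

end Counting

section Lifting
variable {V : Type} [Fintype V] {p : ℕ}

lemma no_copy_induce (G : SimpleGraph V) (S : Finset V) (P : SimpleGraph (Fin p))
    (h : ∀ f : Fin p → V, IsCopy G P f → ¬ (∀ i, f i ∈ S)) :
    ¬ ∃ g, IsCopy (G.induce (S : Set V)) P g := by
  rintro ⟨g, hginj, hgadj⟩
  apply h (fun i => (g i).val)
  · refine ⟨fun a b hab => hginj (Subtype.ext hab), ?_⟩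
    intro i j
    rw [← hgadj i j]
    exact Iff.rfl
  · intro i; exact (g i).prop

lemma no_copy_induce_compl (G : SimpleGraph V) (S : Finset V) (P : SimpleGraph (Fin p))
    (h : ∀ f : Fin p → V, IsCopy Gᶜ P f → ¬ (∀ i, f i ∈ S)) :
    ¬ ∃ g, IsCopy (G.induce (S : Set V))ᶜ P g := by
  rintro ⟨g, hginj, hgadj⟩
  apply h (fun i => (g i).val)
  · refine ⟨fun a b hab => hginj (Subtype.ext hab), ?_⟩
    intro i j
    rw [← hgadj i j]
    simp only [SimpleGraph.compl_adj, SimpleGraph.induce, SimpleGraph.comap_adj]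
    constructor
    · rintro ⟨h1, h2⟩; exact ⟨fun he => h1 (congrArg Subtype.val he), h2⟩
    · rintro ⟨h1, h2⟩; exact ⟨fun he => h1 (Subtype.ext he), h2⟩
  · intro i; exact (g i).prop

lemma isclique_induce_lift [DecidableEq V] (G : SimpleGraph V) (S : Set V) (t : Finset S)
    (h : (G.induce S).IsClique ↑t) : G.IsClique ↑(t.image Subtype.val) := by
  intro a ha b hb hne
  simp only [Finset.coe_image, Set.mem_image, Finset.mem_coe] at ha hb
  obtain ⟨a', ha', rfl⟩ := ha
  obtain ⟨b', hb', rfl⟩ := hb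
  have hne' : a' ≠ b' := fun he => hne (congrArg Subtype.val he)
  have := h (Finset.mem_coe.mpr ha') (Finset.mem_coe.mpr hb') hne'
  exact this

lemma isclique_induce_lift_compl [DecidableEq V] (G : SimpleGraph V) (S : Set V) (t : Finset S)
    (h : (G.induce S)ᶜ.IsClique ↑t) : Gᶜ.IsClique ↑(t.image Subtype.val) := by
  intro a ha b hb hne
  simp only [Finset.coe_image, Set.mem_image, Finset.mem_coe] at ha hb
  obtain ⟨a', ha', rfl⟩ := ha
  obtain ⟨b', hb', rfl⟩ := hb
  have hne' : a' ≠ b' := fun he => hne (congrArg Subtype.val he)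
  have := h (Finset.mem_coe.mpr ha') (Finset.mem_coe.mpr hb') hne'
  rw [SimpleGraph.compl_adj] at this ⊢
  refine ⟨fun he => hne' (Subtype.ext he), ?_⟩
  intro hadj
  exact this.2 hadj

lemma pair_hom (G : SimpleGraph V) (h2 : 2 ≤ Fintype.card V) :
    ∃ s : Finset V, (G.IsClique (s : Set V) ∨ Gᶜ.IsClique (s : Set V)) ∧ s.card = 2 := by
  classical
  obtain ⟨u, w, hne⟩ := Fintype.exists_pair_of_one_lt_card (lt_of_lt_of_le one_lt_two h2)
  have hco : (({u, w} : Finset V) : Set V) = ({u, w} : Set V) := by simp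
  refine ⟨{u, w}, ?_, Finset.card_pair hne⟩
  by_cases h : G.Adj u w
  · left
    rw [hco, SimpleGraph.isClique_pair]
    exact fun _ => h
  · right
    rw [hco, SimpleGraph.isClique_pair]
    exact fun _ => ⟨hne, h⟩

end Lifting

section Arith
open Real

set_option maxHeartbeats 2000000 in
lemma real_facts (p n : ℕ) (hp6 : 6 ≤ p) (hp100 : p ≤ 100) (hn : 2^(64*p) ≤ n) :
    (p + 1 ≤ ⌊(n:ℝ)^((4*((p:ℝ)-1))⁻¹)⌋₊) ∧
    (⌊(n:ℝ)^((4*((p:ℝ)-1))⁻¹)⌋₊ ≤ n) ∧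
    ((n:ℝ)^(((4*((p:ℝ)-1))⁻¹)/2) ≤ (⌊(n:ℝ)^((4*((p:ℝ)-1))⁻¹)⌋₊ : ℝ)/2) ∧
    (4 * (n^(p-1) * Nat.sqrt n) * (⌊(n:ℝ)^((4*((p:ℝ)-1))⁻¹)⌋₊)^p
        ≤ ⌊(n:ℝ)^((4*((p:ℝ)-1))⁻¹)⌋₊ * (n-p)^p) ∧
    ((n:ℝ)^((1:ℝ)/4) ≤ (Nat.sqrt n : ℝ)) := by
  set ν : ℝ := (n : ℝ) with hνdef
  set β : ℝ := (4*((p:ℝ)-1))⁻¹ with hβdef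
  set m : ℕ := ⌊ν^β⌋₊ with hmdef
  have hp6' : (6:ℝ) ≤ (p:ℝ) := by exact_mod_cast hp6
  have hp100' : (p:ℝ) ≤ 100 := by exact_mod_cast hp100
  have hne1 : ((p:ℝ) - 1) ≠ 0 := by nlinarith
  have hβpos : 0 < β := by
    rw [hβdef]; apply inv_pos.mpr; nlinarith
  have hβ1 : β ≤ 1 := by
    rw [hβdef]
    rw [inv_le_one_iff₀]
    right; nlinarith
  have hβp1 : β * ((p:ℝ) - 1) = 4⁻¹ := by
    rw [hβdef]; field_simp
  have hν2 : (2:ℝ)^((64*p : ℕ):ℝ) ≤ ν := by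
    rw [Real.rpow_natCast]
    rw [hνdef]
    exact_mod_cast hn
  have hν1 : (1:ℝ) ≤ ν := by
    refine le_trans ?_ hν2
    rw [Real.rpow_natCast]
    exact one_le_pow₀ one_le_two
  have hν0 : (0:ℝ) < ν := lt_of_lt_of_le one_pos hν1
  -- ν ^ (1/4) ≥ 2 ^ (16 p)
  have h14 : (2:ℝ)^(16*p : ℕ) ≤ ν^((1:ℝ)/4) := by
    have h1 : ((2:ℝ)^((64*p:ℕ):ℝ))^((1:ℝ)/4) ≤ ν^((1:ℝ)/4) :=
      Real.rpow_le_rpow (by positivity) hν2 (by norm_num)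
    refine le_trans (le_of_eq ?_) h1
    rw [← Real.rpow_natCast (2:ℝ) (16*p), ← Real.rpow_mul (by norm_num : (0:ℝ) ≤ 2)]
    congr 1
    push_cast; ring
  -- ν ^ β ≥ 2 ^ 16
  have hβ16 : (65536:ℝ) ≤ ν^β := by
    have h1 : (2:ℝ)^(16:ℝ) ≤ (2:ℝ)^(((64*p:ℕ):ℝ) * β) := by
      apply Real.rpow_le_rpow_of_exponent_le one_le_two
      have he : ((64*p:ℕ):ℝ) * β = 16 * ((p:ℝ) / ((p:ℝ)-1)) := by
        rw [hβdef]; push_cast; field_simp; ring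
      rw [he]
      have h2 : (1:ℝ) ≤ (p:ℝ) / ((p:ℝ)-1) := by
        rw [le_div_iff₀ (by nlinarith)]; nlinarith
      nlinarith
    have h3 : (2:ℝ)^(((64*p:ℕ):ℝ) * β) ≤ ν^β := by
      rw [Real.rpow_mul (by norm_num)]
      exact Real.rpow_le_rpow (by positivity) hν2 (le_of_lt hβpos)
    have h4 : (65536:ℝ) = (2:ℝ)^(16:ℝ) := by
      rw [show (16:ℝ) = ((16:ℕ):ℝ) by norm_num, Real.rpow_natCast]
      norm_num
    rw [h4]; exact le_trans h1 h3
  -- m bounds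
  have hm_up : (m:ℝ) ≤ ν^β := Nat.floor_le (Real.rpow_nonneg (le_of_lt hν0) _)
  have hm_low : ν^β - 1 < (m:ℝ) := by
    have := Nat.lt_floor_add_one (ν^β)
    rw [hmdef]
    linarith
  have hm_half : ν^β/2 ≤ (m:ℝ) := by nlinarith
  -- ν^(β/2) facts
  have hhalfsq : ν^(β/2) * ν^(β/2) = ν^β := by
    rw [← Real.rpow_add hν0]; congr 1; ring
  have hhalfnn : (0:ℝ) ≤ ν^(β/2) := Real.rpow_nonneg (le_of_lt hν0) _
  have hhalf_ge : (256:ℝ) ≤ ν^(β/2) := by nlinarith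
  have hm_p1 : p + 1 ≤ m := by
    have : ((p:ℝ) + 1) ≤ (m:ℝ) := by nlinarith
    exact_mod_cast this
  have hm_n : m ≤ n := by
    have h1 : ν^β ≤ ν^(1:ℝ) := Real.rpow_le_rpow_of_exponent_le hν1 hβ1
    rw [Real.rpow_one] at h1
    have : (m:ℝ) ≤ (n:ℝ) := le_trans hm_up h1
    exact_mod_cast this
  have hm2 : ν^(β/2) ≤ (m:ℝ)/2 := by
    have h1 : 256 * ν^(β/2) ≤ ν^(β/2) * ν^(β/2) := by nlinarith
    linarith [h1, hhalfsq, hm_half, hhalfnn]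
  -- sqrt facts
  have hs_up : (Nat.sqrt n : ℝ) ≤ ν^((1:ℝ)/2) := by
    rw [← Real.sqrt_eq_rpow]
    rw [Real.le_sqrt (Nat.cast_nonneg _) (le_of_lt hν0)]
    rw [hνdef]
    exact_mod_cast Nat.sqrt_le' n
  have hq2 : (2:ℝ) ≤ ν^((1:ℝ)/4) := by
    refine le_trans ?_ h14
    calc (2:ℝ) = 2^(1:ℕ) := (pow_one 2).symm
      _ ≤ 2^(16*p:ℕ) := by
          apply pow_le_pow_right₀ one_le_two
          omega
  have hqq : ν^((1:ℝ)/4) * ν^((1:ℝ)/4) = ν^((1:ℝ)/2) := by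
    rw [← Real.rpow_add hν0]; norm_num
  have hs_low : ν^((1:ℝ)/4) ≤ (Nat.sqrt n : ℝ) := by
    have h2 : ν ≤ ((Nat.sqrt n:ℝ)+1)^2 := by
      rw [hνdef]
      have := Nat.lt_succ_sqrt' n
      have h3 : (n:ℝ) < ((Nat.sqrt n + 1 : ℕ):ℝ)^2 := by exact_mod_cast this
      push_cast at h3
      linarith
    have h1 : ν^((1:ℝ)/2) ≤ (Nat.sqrt n:ℝ) + 1 := by
      rw [← Real.sqrt_eq_rpow]
      calc Real.sqrt ν ≤ Real.sqrt (((Nat.sqrt n:ℝ)+1)^2) := Real.sqrt_le_sqrt h2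
        _ = (Nat.sqrt n:ℝ)+1 := Real.sqrt_sq (by positivity)
    nlinarith
  refine ⟨hm_p1, hm_n, hm2, ?_, hs_low⟩
  -- the key counting inequality
  have hpn2 : 2*p ≤ n := by
    have h1 : p < 2^p := Nat.lt_two_pow_self
    have h2 : 2^(p+1) ≤ 2^(64*p) := Nat.pow_le_pow_right (by norm_num) (by omega)
    have : 2*p ≤ 2^(p+1) := by
      have := Nat.lt_two_pow_self (n := p)
      calc 2*p ≤ 2*2^p := by omega
        _ = 2^(p+1) := by rw [pow_succ]; ring
    omega
  have hpn : p ≤ n := by omega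
  have hνp2 : ν/2 ≤ ν - (p:ℝ) := by
    have : (2*p : ℕ) ≤ (n:ℕ) := hpn2
    have h1 : 2*(p:ℝ) ≤ ν := by rw [hνdef]; exact_mod_cast this
    linarith
  set E1 : ℝ := ((p-1:ℕ):ℝ) + 1/2 + β*(p:ℝ) with hE1def
  have hcast_p1 : ((p-1:ℕ):ℝ) = (p:ℝ) - 1 := by
    rw [Nat.cast_sub (by omega)]; norm_num
  have step1 : 4*((ν^((p-1:ℕ):ℕ)) * (Nat.sqrt n:ℝ)) * (m:ℝ)^(p:ℕ)
      ≤ 4*((ν^((p-1:ℕ):ℕ)) * ν^((1:ℝ)/2)) * (ν^β)^(p:ℕ) := by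
    have hA : (0:ℝ) ≤ ν^((p-1:ℕ):ℕ) := by positivity
    apply mul_le_mul
    · apply mul_le_mul_of_nonneg_left ?_ (by norm_num)
      exact mul_le_mul_of_nonneg_left hs_up hA
    · exact pow_le_pow_left₀ (Nat.cast_nonneg m) hm_up p
    · positivity
    · positivity
  have step2 : 4*((ν^((p-1:ℕ):ℕ)) * ν^((1:ℝ)/2)) * (ν^β)^(p:ℕ) = 4 * ν^E1 := by
    rw [hE1def, Real.rpow_add hν0, Real.rpow_add hν0, Real.rpow_mul (le_of_lt hν0),
      Real.rpow_natCast, Real.rpow_natCast]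
    ring
  have h2p : (4:ℝ)*2^(p+1:ℕ) ≤ ν^((1:ℝ)/4) := by
    refine le_trans ?_ h14
    calc (4:ℝ)*2^(p+1:ℕ) = 2^(p+3:ℕ) := by rw [pow_add, pow_add]; ring
      _ ≤ 2^(16*p:ℕ) := by
        apply pow_le_pow_right₀ one_le_two
        omega
  have step3 : 4 * ν^E1 * 2^(p+1:ℕ) ≤ ν^(β+(p:ℝ)) := by
    have hE : β + (p:ℝ) = E1 + 1/4 := by
      rw [hE1def, hcast_p1]
      have : β * ((p:ℝ)) = β * ((p:ℝ)-1) + β := by ring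
      rw [this, hβp1]
      ring
    have hnn : (0:ℝ) ≤ ν^E1 := Real.rpow_nonneg (le_of_lt hν0) _
    calc 4 * ν^E1 * 2^(p+1:ℕ) = ν^E1 * (4*2^(p+1:ℕ)) := by ring
      _ ≤ ν^E1 * ν^((1:ℝ)/4) := mul_le_mul_of_nonneg_left h2p hnn
      _ = ν^(E1 + 1/4) := (Real.rpow_add hν0 E1 (1/4)).symm
      _ = ν^(β+(p:ℝ)) := by rw [hE]
  have step5 : (ν^β/2)*((ν/2))^(p:ℕ) ≤ (m:ℝ)*(ν-(p:ℝ))^(p:ℕ) := by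
    apply mul_le_mul hm_half
    · exact pow_le_pow_left₀ (by positivity) hνp2 p
    · positivity
    · exact Nat.cast_nonneg m
  have hfin : 4*ν^E1 ≤ (ν^β/2)*((ν/2))^(p:ℕ) := by
    have e : (ν^β/2)*((ν/2))^(p:ℕ) = ν^β*ν^((p:ℕ))/2^(p+1:ℕ) := by
      rw [div_pow, pow_succ]
      ring
    rw [e, le_div_iff₀ (by positivity)]
    calc 4*ν^E1*2^(p+1:ℕ) ≤ ν^(β+(p:ℝ)) := step3
      _ = ν^β*ν^((p:ℕ)) := by
        rw [Real.rpow_add hν0, Real.rpow_natCast]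
  have main_real : 4*((ν^((p-1:ℕ):ℕ)) * (Nat.sqrt n:ℝ)) * (m:ℝ)^(p:ℕ)
      ≤ (m:ℝ)*(ν-(p:ℝ))^(p:ℕ) := by
    calc 4*((ν^((p-1:ℕ):ℕ)) * (Nat.sqrt n:ℝ)) * (m:ℝ)^(p:ℕ)
        ≤ 4*((ν^((p-1:ℕ):ℕ)) * ν^((1:ℝ)/2)) * (ν^β)^(p:ℕ) := step1
      _ = 4 * ν^E1 := step2
      _ ≤ (ν^β/2)*((ν/2))^(p:ℕ) := hfin
      _ ≤ (m:ℝ)*(ν-(p:ℝ))^(p:ℕ) := step5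
  have : ((4 * (n^(p-1) * Nat.sqrt n) * m^p : ℕ):ℝ) ≤ ((m * (n-p)^p : ℕ):ℝ) := by
    push_cast [Nat.cast_sub hpn]
    convert main_real using 2 <;> push_cast <;> ring
  exact_mod_cast this

end Arith

section Step
open Finset
attribute [local instance 10] Classical.propDecidable

set_option maxHeartbeats 2000000 in
lemma step_lemma {p : ℕ} (hp6 : 6 ≤ p) (hp100 : p ≤ 100) (P : SimpleGraph (Fin p)) (x : Fin p)
    {ε : ℝ} (hε : 0 < ε) (hEH : EHProp p P ε) :
    EHProp (p+1) (extendTwin P x) (min ε 1 / (64 * (p:ℝ))) := by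
  intro V _ G hG hGc
  classical
  set ε' : ℝ := min ε 1 / (64 * (p:ℝ)) with hε'def
  have hp6' : (6:ℝ) ≤ (p:ℝ) := by exact_mod_cast hp6
  have hminpos : 0 < min ε 1 := lt_min hε one_pos
  have hε'pos : 0 < ε' := by
    rw [hε'def]; apply div_pos hminpos; nlinarith
  set n := Fintype.card V with hn
  rcases Nat.lt_or_ge n 2 with hsmall2 | h2
  · have h01 : n = 0 ∨ n = 1 := by omega
    rcases h01 with h0 | h1
    · refine ⟨∅, Or.inl ?_, ?_⟩
      · simp
      · rw [h0]
        push_cast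
        rw [Real.zero_rpow (ne_of_gt hε'pos)]
        simp
    · refine ⟨Finset.univ, Or.inl ?_, ?_⟩
      · intro a _ b _ hab
        have := Fintype.card_le_one_iff.mp (by omega : Fintype.card V ≤ 1)
        exact absurd (this a b) hab
      · rw [h1]
        push_cast
        rw [Real.one_rpow]
        rw [Finset.card_univ, ← hn, h1]
        norm_num
  · by_cases hbig : n < 2^(64*p)
    · obtain ⟨s, hs, hc2⟩ := pair_hom G (by omega)
      refine ⟨s, hs, ?_⟩
      rw [hc2]
      have hb1 : (n:ℝ) ≤ ((2:ℝ)^(64*p:ℕ)) := by exact_mod_cast le_of_lt hbig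
      have hstep : (n:ℝ)^ε' ≤ ((2:ℝ)^(64*p:ℕ))^ε' :=
        Real.rpow_le_rpow (Nat.cast_nonneg n) hb1 (le_of_lt hε'pos)
      refine le_trans hstep ?_
      rw [← Real.rpow_natCast (2:ℝ) (64*p), ← Real.rpow_mul (by norm_num)]
      have hexp : ((64*p:ℕ):ℝ)*ε' ≤ 1 := by
        rw [hε'def]
        push_cast
        rw [mul_div_assoc']
        rw [div_le_one (by nlinarith)]
        calc 64 * (p:ℝ) * min ε 1 = min ε 1 * (64 * (p:ℝ)) := by ring
          _ ≤ 1 * (64 * (p:ℝ)) := by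
              apply mul_le_mul_of_nonneg_right (min_le_right ε 1) (by nlinarith)
          _ = 64 * (p:ℝ) := by ring
      calc (2:ℝ)^(((64*p:ℕ):ℝ)*ε') ≤ (2:ℝ)^(1:ℝ) :=
            Real.rpow_le_rpow_of_exponent_le one_le_two hexp
        _ = 2 := Real.rpow_one 2
    · push_neg at hbig
      obtain ⟨hm_p1, hm_n, hm2, hkey, hs_low⟩ := real_facts p n hp6 hp100 hbig
      set β : ℝ := (4*((p:ℝ)-1))⁻¹ with hβdef
      set m : ℕ := ⌊(n:ℝ)^β⌋₊ with hmdef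
      set s₀ : ℕ := Nat.sqrt n with hs₀def
      have hν1 : (1:ℝ) ≤ (n:ℝ) := by exact_mod_cast (by omega : 1 ≤ n)
      have hν0 : (0:ℝ) ≤ (n:ℝ) := by positivity
      have hε'14 : ε' ≤ 1/4 := by
        rw [hε'def]
        rw [div_le_div_iff₀ (by nlinarith) (by norm_num)]
        calc (min ε 1) * 4 ≤ 1 * 4 := by
              apply mul_le_mul_of_nonneg_right (min_le_right ε 1) (by norm_num)
          _ ≤ 1 * (64 * (p:ℝ)) := by nlinarith
      have hupper14 : (n:ℝ)^ε' ≤ (s₀:ℝ) := by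
        calc (n:ℝ)^ε' ≤ (n:ℝ)^((1:ℝ)/4) :=
              Real.rpow_le_rpow_of_exponent_le hν1 (by linarith)
          _ ≤ (s₀:ℝ) := hs_low
      by_cases hAG : ∃ t, PartCopy G P x t ∧ s₀ ≤ (ExtSet G P x t).card
      · obtain ⟨t, ht, hcard⟩ := hAG
        have hind := ext_indep G P x hG t ht
        refine ⟨ExtSet G P x t, Or.inr ?_, ?_⟩
        · intro a ha b hb hab
          rw [SimpleGraph.compl_adj]
          exact ⟨hab, hind a (Finset.mem_coe.mp ha) b (Finset.mem_coe.mp hb) hab⟩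
        · refine le_trans hupper14 ?_
          exact_mod_cast hcard
      · by_cases hAC : ∃ t, PartCopy Gᶜ P x t ∧ s₀ ≤ (ExtSet Gᶜ P x t).card
        · obtain ⟨t, ht, hcard⟩ := hAC
          have hind := ext_indep Gᶜ P x hGc t ht
          refine ⟨ExtSet Gᶜ P x t, Or.inl ?_, ?_⟩
          · intro a ha b hb hab
            by_contra hnadj
            exact hind a (Finset.mem_coe.mp ha) b (Finset.mem_coe.mp hb) hab ⟨hab, hnadj⟩
          · refine le_trans hupper14 ?_
            exact_mod_cast hcard
        · -- Branch B
          push_neg at hAG hAC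
          have hcountG := copy_count G P x s₀ (fun t ht => le_of_lt (hAG t ht))
          have hcountC := copy_count Gᶜ P x s₀ (fun t ht => le_of_lt (hAC t ht))
          rw [← hn] at hcountG hcountC
          have hpm : p ≤ m := by omega
          have havgG := avg_copies G P m hpm
          have havgC := avg_copies Gᶜ P m hpm
          rw [← hn] at havgG havgC
          have hppos : 0 < p := by omega
          have hnppos : 0 < n - p := by
            have : p < 2^(64*p) := lt_of_lt_of_le (Nat.lt_two_pow_self (n := p))
              (Nat.pow_le_pow_right (by norm_num) (by omega))
            omega
          have hex : ∃ S ∈ (Finset.univ : Finset V).powersetCard m,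
              2*(((copyIn G P S).card
                + (copyIn Gᶜ P S).card)) ≤ m := by
            by_contra hno
            push_neg at hno
            have hsum : ∀ S ∈ (Finset.univ : Finset V).powersetCard m,
                m+1 ≤ 2*(((copyIn G P S).card
                  + (copyIn Gᶜ P S).card)) :=
              fun S hS => hno S hS
            have h1 := Finset.card_nsmul_le_sum _ _ _ hsum
            rw [Finset.card_powersetCard, Finset.card_univ, ← hn] at h1
            have hsplit : ∑ S ∈ (Finset.univ : Finset V).powersetCard m,
                2*(((copyIn G P S).card
                  + (copyIn Gᶜ P S).card))
                = 2*(((copyF G P).card + (copyF Gᶜ P).card) * ((n-p).choose (m-p))) := by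
              rw [← Finset.mul_sum]
              congr 1
              rw [Finset.sum_add_distrib, havgG, havgC]
              ring
            rw [hsplit, smul_eq_mul] at h1
            -- numeric contradiction
            have c1 : (n.choose m) * (m+1) ≤ 2*(((copyF G P).card + (copyF Gᶜ P).card) * ((n-p).choose (m-p))) := h1
            have c2 : 2*((copyF G P).card + (copyF Gᶜ P).card) ≤ 4*(n^(p-1) * s₀) := by
              have := Nat.add_le_add hcountG hcountC
              omega
            have c3 : (n.choose m) * (m+1) * ((n-p)^p)
                ≤ 2*(((copyF G P).card + (copyF Gᶜ P).card)) * (((n-p).choose (m-p)) * ((n-p)^p)) := by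
              calc (n.choose m) * (m+1) * ((n-p)^p)
                  ≤ 2*(((copyF G P).card + (copyF Gᶜ P).card) * ((n-p).choose (m-p))) * ((n-p)^p) :=
                    Nat.mul_le_mul_right _ c1
                _ = 2*(((copyF G P).card + (copyF Gᶜ P).card)) * (((n-p).choose (m-p)) * ((n-p)^p)) := by ring
            have c4 : 2*(((copyF G P).card + (copyF Gᶜ P).card)) * (((n-p).choose (m-p)) * ((n-p)^p))
                ≤ 2*(((copyF G P).card + (copyF Gᶜ P).card)) * ((n.choose m) * (m^p)) :=
              Nat.mul_le_mul_left _ (chooseaux p m n hpm hm_n)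
            have c5 : 2*(((copyF G P).card + (copyF Gᶜ P).card)) * ((n.choose m) * (m^p))
                ≤ (4*(n^(p-1) * s₀) * m^p) * (n.choose m) := by
              calc 2*(((copyF G P).card + (copyF Gᶜ P).card)) * ((n.choose m) * (m^p))
                  = (2*((copyF G P).card + (copyF Gᶜ P).card) * m^p) * (n.choose m) := by ring
                _ ≤ (4*(n^(p-1) * s₀) * m^p) * (n.choose m) := by
                    apply Nat.mul_le_mul_right
                    exact Nat.mul_le_mul_right _ c2
            have c6 : (4*(n^(p-1) * s₀) * m^p) * (n.choose m) ≤ (m * (n-p)^p) * (n.choose m) :=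
              Nat.mul_le_mul_right _ hkey
            have hfinal : (n.choose m) * (m+1) * ((n-p)^p) ≤ (n.choose m) * m * ((n-p)^p) := by
              calc (n.choose m) * (m+1) * ((n-p)^p) ≤ (m * (n-p)^p) * (n.choose m) :=
                    le_trans c3 (le_trans c4 (le_trans c5 c6))
                _ = (n.choose m) * m * ((n-p)^p) := by ring
            have hCpos : 0 < n.choose m := Nat.choose_pos hm_n
            have hPpos : 0 < (n-p)^p := pow_pos hnppos _
            nlinarith [hfinal, hCpos, hPpos]
          obtain ⟨S, hSmem, hSsmall⟩ := hex
          rw [Finset.mem_powersetCard] at hSmem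
          obtain ⟨-, hScard⟩ := hSmem
          set D := ((copyIn G P S)
            ∪ (copyIn Gᶜ P S)).image (fun f => f ⟨0, by omega⟩) with hD
          set S' := S \ D with hS'
          have hDcard : D.card ≤ (copyIn G P S).card
              + (copyIn Gᶜ P S).card := by
            refine le_trans (Finset.card_image_le) ?_
            exact Finset.card_union_le _ _
          have hS'card : m ≤ 2 * S'.card := by
            have h1 : S.card - D.card ≤ S'.card := Finset.le_card_sdiff D S
            omega
          -- no copies within S'
          have hkillG : ∀ f : Fin p → V, IsCopy G P f → ¬ (∀ i, f i ∈ S') := by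
            intro f hf hall
            have hfS : ∀ i, f i ∈ S := fun i => (Finset.mem_sdiff.mp (hall i)).1
            have hfmem : f ∈ copyIn G P S := by
              rw [copyIn, Finset.mem_filter, copyF, Finset.mem_filter]
              exact ⟨⟨Finset.mem_univ _, hf⟩, hfS⟩
            have : f ⟨0, by omega⟩ ∈ D := by
              rw [hD]
              apply Finset.mem_image_of_mem
              exact Finset.mem_union_left _ hfmem
            exact (Finset.mem_sdiff.mp (hall ⟨0, by omega⟩)).2 this
          have hkillC : ∀ f : Fin p → V, IsCopy Gᶜ P f → ¬ (∀ i, f i ∈ S') := by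
            intro f hf hall
            have hfS : ∀ i, f i ∈ S := fun i => (Finset.mem_sdiff.mp (hall i)).1
            have hfmem : f ∈ copyIn Gᶜ P S := by
              rw [copyIn, Finset.mem_filter, copyF, Finset.mem_filter]
              exact ⟨⟨Finset.mem_univ _, hf⟩, hfS⟩
            have : f ⟨0, by omega⟩ ∈ D := by
              rw [hD]
              apply Finset.mem_image_of_mem
              exact Finset.mem_union_right _ hfmem
            exact (Finset.mem_sdiff.mp (hall ⟨0, by omega⟩)).2 this
          obtain ⟨t, htclique, htcard⟩ := hEH _ (G.induce (S' : Set V))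
            (no_copy_induce G S' P hkillG) (no_copy_induce_compl G S' P hkillC)
          have hcardeq : Fintype.card ↥(S' : Set V) = S'.card := Fintype.card_coe S'
          refine ⟨t.image Subtype.val, ?_, ?_⟩
          · rcases htclique with hcl | hcl
            · exact Or.inl (isclique_induce_lift G _ t hcl)
            · exact Or.inr (isclique_induce_lift_compl G _ t hcl)
          · rw [Finset.card_image_of_injective _ Subtype.val_injective]
            rw [hcardeq] at htcard
            have hS'real : (n:ℝ)^(β/2) ≤ (S'.card : ℝ) := by
              have h1 : ((m:ℝ)/2) ≤ (S'.card:ℝ) := by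
                have : (m:ℝ) ≤ 2*(S'.card:ℝ) := by exact_mod_cast hS'card
                linarith
              exact le_trans hm2 h1
            have hεε' : ε' ≤ (β/2)*ε := by
              rw [hε'def, hβdef]
              have h8 : (β/2) = (8*((p:ℝ)-1))⁻¹ := by
                rw [hβdef]
                rw [← one_div, ← one_div]
                field_simp
                ring
              rw [h8]
              rw [div_le_iff₀ (by nlinarith)]
              rw [inv_mul_eq_div, div_mul_eq_mul_div, le_div_iff₀ (by nlinarith)]
              calc min ε 1 * (8*((p:ℝ)-1)) ≤ ε * (8*((p:ℝ)-1)) := by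
                    apply mul_le_mul_of_nonneg_right (min_le_left ε 1) (by nlinarith)
                _ ≤ ε * (64 * (p:ℝ)) := by
                    apply mul_le_mul_of_nonneg_left (by nlinarith) (le_of_lt hε)
            calc (n:ℝ)^ε' ≤ (n:ℝ)^((β/2)*ε) :=
                  Real.rpow_le_rpow_of_exponent_le hν1 hεε'
              _ = ((n:ℝ)^(β/2))^ε := by
                  rw [← Real.rpow_mul hν0]
              _ ≤ ((S'.card : ℝ))^ε := by
                  apply Real.rpow_le_rpow (Real.rpow_nonneg hν0 _) hS'real (le_of_lt hε)
              _ ≤ (t.card : ℝ) := htcard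

end Step

theorem config_free_erdos_hajnal (c : ℝ) (hc : 0 < c)
    (hEH : ∀ (W : Type) [Fintype W] (H : SimpleGraph W),
      ¬ HasInducedC6 H → ¬ HasInducedC6 Hᶜ →
        ∃ s : Finset W, (H.IsClique (s : Set W) ∨ Hᶜ.IsClique (s : Set W)) ∧
          (Fintype.card W : ℝ) ^ c ≤ s.card) :
    ∃ ε : ℝ, 0 < ε ∧
      ∀ (V : Type) [Fintype V] (G : SimpleGraph V),
        2 ≤ Fintype.card V → ¬ HasConfig G → ¬ HasConfig Gᶜ →
        ∃ s : Finset V, (G.IsClique (s : Set V) ∨ Gᶜ.IsClique (s : Set V)) ∧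
          (Fintype.card V : ℝ) ^ ε ≤ s.card := by
  have base : EHProp 6 C6G c := by
    intro V _ G h1 h2
    apply hEH V G
    · rintro ⟨v, hv, ha⟩
      exact h1 ⟨v, hv, fun i j => ha i j⟩
    · rintro ⟨v, hv, ha⟩
      exact h2 ⟨v, hv, fun i j => ha i j⟩
  have h7 : EHProp 7 P7 (min c 1 / (64 * ((6:ℕ):ℝ))) :=
    step_lemma (by norm_num) (by norm_num) C6G 1 hc base
  have hε1 : 0 < min c 1 / (64 * ((6:ℕ):ℝ)) := by
    apply div_pos (lt_min hc one_pos); norm_num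
  have h8 : EHProp 8 P8 (min (min c 1 / (64 * ((6:ℕ):ℝ))) 1 / (64 * ((7:ℕ):ℝ))) :=
    step_lemma (by norm_num) (by norm_num) P7 3 hε1 h7
  have hε2 : 0 < min (min c 1 / (64 * ((6:ℕ):ℝ))) 1 / (64 * ((7:ℕ):ℝ)) := by
    apply div_pos (lt_min hε1 one_pos); norm_num
  have h9 : EHProp 9 P9
      (min (min (min c 1 / (64 * ((6:ℕ):ℝ))) 1 / (64 * ((7:ℕ):ℝ))) 1 / (64 * ((8:ℕ):ℝ))) :=
    step_lemma (by norm_num) (by norm_num) P8 5 hε2 h8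
  have hε3 : 0 < min (min (min c 1 / (64 * ((6:ℕ):ℝ))) 1 / (64 * ((7:ℕ):ℝ))) 1
      / (64 * ((8:ℕ):ℝ)) := by
    apply div_pos (lt_min hε2 one_pos); norm_num
  refine ⟨_, hε3, ?_⟩
  intro V _ G _ hcfg hcfgc
  apply h9 V G
  · rintro ⟨f, hf⟩
    exact hcfg (copy_p9_hasConfig G f hf)
  · rintro ⟨f, hf⟩
    exact hcfgc (copy_p9_hasConfig Gᶜ f hf)
end
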